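/- arXiv:1211.5342 — 11 statements merged into one kernel-verified Lean document; each statement's English description precedes it below -/
import Mathlib

section
/- Let S be a nonabelian finite simple group and let m be a positive integer. Then σ(S ≀ C_m) ≤ α(m) + min_N Σ_{M ∈ N} [S : M]^{m−1}, where the minimum is taken over all coverings N of S (sets of proper subgroups of S whose union is S). -/
open scoped BigOperators

/-- The cyclic shift automorphism of `ZMod m → S` by `k`: `(f · k) i = f (i + k)`. -/
def shiftEquiv (S : Type*) [Group S] {m : ℕ} (k : ZMod m) : (ZMod m → S) ≃* (ZMod m → S) where
  toFun f i := f (i + k)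
  invFun f i := f (i - k)
  left_inv f := funext fun i => by simp
  right_inv f := funext fun i => by simp
  map_mul' f g := rfl

/-- The action of `C_m` on `S^m` by cyclic shifts. -/
def shiftHom (S : Type*) [Group S] (m : ℕ) :
    Multiplicative (ZMod m) →* MulAut (ZMod m → S) where
  toFun k := shiftEquiv S k.toAdd
  map_one' := by
    ext f i
    simp [shiftEquiv]
  map_mul' a b := by
    ext f i
    simp [shiftEquiv, add_assoc]

/-- The wreath product `S ≀ C_m`: the semidirect product of `S^m = (ZMod m → S)` by the
cyclic group `C_m = Multiplicative (ZMod m)` acting by cyclic shifts. -/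
abbrev WreathCyclic (S : Type*) [Group S] (m : ℕ) :=
  SemidirectProduct (ZMod m → S) (Multiplicative (ZMod m)) (shiftHom S m)

section WreathAux
variable {S : Type*} [Group S] {m : ℕ}

lemma shift_apply (x : Multiplicative (ZMod m)) (f : ZMod m → S) (i : ZMod m) :
    (shiftHom S m x f) i = f (i + x.toAdd) := rfl

lemma shift_inv_apply (x : Multiplicative (ZMod m)) (f : ZMod m → S) (i : ZMod m) :
    ((shiftHom S m x)⁻¹ f) i = f (i - x.toAdd) := rfl

def baseSG (M : Subgroup S) (h : ZMod m → S) : Subgroup (WreathCyclic S m) where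
  carrier := {g | ∀ i, (h i)⁻¹ * g.left i * h (i + g.right.toAdd) ∈ M}
  one_mem' := by intro i; simpa using one_mem M
  mul_mem' := by
    intro a b ha hb i
    have := mul_mem (ha i) (hb (i + a.right.toAdd))
    simpa [shift_apply, mul_assoc, add_assoc] using this
  inv_mem' := by
    intro a ha i
    have := inv_mem (ha (i + a.right⁻¹.toAdd))
    simpa [shift_apply, shift_inv_apply, mul_assoc, sub_eq_add_neg, add_assoc] using this

lemma mem_baseSG {M : Subgroup S} {h : ZMod m → S} {g : WreathCyclic S m} :
    g ∈ baseSG M h ↔ ∀ i, (h i)⁻¹ * g.left i * h (i + g.right.toAdd) ∈ M := Iff.rfl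

def primePart (m : ℕ) (p : ℕ) : Subgroup (WreathCyclic S m) :=
  (AddSubgroup.toSubgroup (AddSubgroup.zmultiples (p : ZMod m))).comap
    (SemidirectProduct.rightHom)

lemma mem_primePart {p : ℕ} {g : WreathCyclic S m} :
    g ∈ primePart m p ↔ g.right.toAdd ∈ AddSubgroup.zmultiples ((p : ZMod m)) := Iff.rfl


noncomputable def hfun (M : Subgroup S) (d : {i : ZMod m // i ≠ 0} → S ⧸ M) : ZMod m → S :=
  fun i => if hi : i = 0 then 1 else (d ⟨i, hi⟩).out

lemma baseSG_ne_top {M : Subgroup S} (hM : M ≠ ⊤) (h : ZMod m → S) :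
    baseSG M h ≠ ⊤ := by
  obtain ⟨x, hx⟩ : ∃ x : S, x ∉ M := by
    by_contra hc
    push_neg at hc
    exact hM ((Subgroup.eq_top_iff' M).mpr hc)
  intro htop
  have : SemidirectProduct.inl (φ := shiftHom S m) (fun _ => h 0 * x * (h 0)⁻¹) ∈ baseSG M h := by
    rw [htop]; trivial
  have h0 := this 0
  simp only [SemidirectProduct.left_inl, SemidirectProduct.right_inl] at h0
  rw [show Multiplicative.toAdd (1 : Multiplicative (ZMod m)) = 0 from rfl] at h0
  simp [mul_assoc] at h0
  exact hx h0

lemma primePart_ne_top {p : ℕ} (hp : p.Prime) (hpm : p ∣ m) :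
    primePart (S := S) m p ≠ ⊤ := by
  haveI : Fact (1 < p) := ⟨hp.one_lt⟩
  intro htop
  have : SemidirectProduct.inr (φ := shiftHom S m) (Multiplicative.ofAdd (1 : ZMod m)) ∈
      primePart (S := S) m p := by rw [htop]; trivial
  rw [mem_primePart] at this
  simp only [SemidirectProduct.right_inr, toAdd_ofAdd] at this
  obtain ⟨z, hz⟩ := AddSubgroup.mem_zmultiples_iff.mp this
  have := congrArg (ZMod.castHom hpm (ZMod p)) hz
  rw [map_zsmul, map_one, map_natCast, ZMod.natCast_self, smul_zero] at this
  exact zero_ne_one this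

variable [NeZero m]

lemma exists_mem_baseSG {𝒩 : Finset (Subgroup S)} (hcov : ∀ x : S, ∃ H ∈ 𝒩, x ∈ H)
    (g : WreathCyclic S m) (hcop : Nat.Coprime (g.right.toAdd.val) m) :
    ∃ M ∈ 𝒩, ∃ d : ({i : ZMod m // i ≠ 0} → S ⧸ M), g ∈ baseSG M (hfun M d) := by
  classical
  set k : ZMod m := g.right.toAdd with hk
  set f : ZMod m → S := g.left with hf
  set u : (ZMod m)ˣ := ZMod.unitOfCoprime k.val hcop with hu
  have hukey : (u : ZMod m) = k := by
    rw [hu, ZMod.coe_unitOfCoprime]; exact ZMod.natCast_rightInverse k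
  set v : ZMod m := ((u⁻¹ : (ZMod m)ˣ) : ZMod m) with hv
  have hvk : v * k = 1 := by rw [hv, ← hukey]; exact u.inv_mul
  set t : ZMod m → ℕ := fun i => (i * v).val with ht
  set q : ℕ → S := fun j => ((List.range j).map (fun l => f ((l : ZMod m) * k))).prod with hq
  have hq_succ : ∀ j, q (j+1) = q j * f ((j : ZMod m) * k) := by
    intro j; simp [hq, List.range_succ]
  have hcast : ∀ i : ZMod m, ((t i : ℕ) : ZMod m) = i * v := fun i =>
    ZMod.natCast_rightInverse _
  have hit : ∀ i : ZMod m, ((t i : ℕ) : ZMod m) * k = i := by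
    intro i
    rw [hcast, mul_assoc, hvk, mul_one]
  obtain ⟨M, hM𝒩, hPM⟩ := hcov (q m)
  set hs : ZMod m → S := fun i => (q (t i))⁻¹ with hhs
  have ht0 : t 0 = 0 := by simp [ht]
  have hq0 : q 0 = 1 := by simp [hq]
  have hstar0 : hs 0 = 1 := by rw [hhs]; simp [ht0, hq0]
  have key : ∀ i, (hs i)⁻¹ * f i * hs (i + k) ∈ M := by
    intro i
    have hlt : t i < m := ZMod.val_lt _
    have htik : t (i + k) = (t i + 1) % m := by
      have h1 : (i + k) * v = ((t i + 1 : ℕ) : ZMod m) := by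
        push_cast
        rw [hcast, add_mul, mul_comm k v, hvk]
      have h2 : t (i + k) = (((t i + 1 : ℕ) : ZMod m)).val := by
        show ((i + k) * v).val = _
        rw [h1]
      rw [h2, ZMod.val_natCast]
    have hfi : f ((t i : ZMod m) * k) = f i := by rw [hit]
    by_cases hcase : t i + 1 < m
    · have h2 : t (i + k) = t i + 1 := by rw [htik, Nat.mod_eq_of_lt hcase]
      have : (hs i)⁻¹ * f i * hs (i + k) = 1 := by
        rw [hhs]
        simp only [inv_inv, h2, hq_succ, hfi]
        group
      rw [this]; exact one_mem M
    · have hm2 : t i + 1 = m := by omega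
      have h2 : t (i + k) = 0 := by rw [htik, hm2, Nat.mod_self]
      have : (hs i)⁻¹ * f i * hs (i + k) = q m := by
        rw [hhs]
        simp only [inv_inv, h2, hq0, inv_one, mul_one, ← hm2, hq_succ, hfi]
      rw [this]; exact hPM
  set d : {i : ZMod m // i ≠ 0} → S ⧸ M := fun i => QuotientGroup.mk (hs i.1) with hd
  have hrel : ∀ i, (hs i)⁻¹ * hfun M d i ∈ M := by
    intro i
    by_cases hi : i = 0
    · subst hi
      rw [hstar0, show hfun M d 0 = 1 from dif_pos rfl]
      simpa using one_mem M
    · rw [show hfun M d i = (d ⟨i, hi⟩).out from dif_neg hi, hd]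
      exact QuotientGroup.eq.mp ((QuotientGroup.out_eq' _).symm)
  refine ⟨M, hM𝒩, d, ?_⟩
  rw [mem_baseSG]
  intro i
  rw [← hk, ← hf]
  have e : (hfun M d i)⁻¹ * f i * hfun M d (i + k) =
      ((hs i)⁻¹ * hfun M d i)⁻¹ * ((hs i)⁻¹ * f i * hs (i + k)) *
        ((hs (i + k))⁻¹ * hfun M d (i + k)) := by group
  rw [e]
  exact mul_mem (mul_mem (inv_mem (hrel i)) (key i)) (hrel _)

end WreathAux

/-- `coveringNumber X` = σ(X): the least number of proper subgroups of `X` whose union is `X`. -/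
noncomputable def coveringNumber (X : Type*) [Group X] : ℕ :=
  sInf {n | ∃ 𝒩 : Finset (Subgroup X), 𝒩.card = n ∧ (∀ H ∈ 𝒩, H ≠ ⊤) ∧
    ∀ x : X, ∃ H ∈ 𝒩, x ∈ H}

/-- `alpha m` = α(m): the number of distinct prime divisors of `m`. -/
def alpha (m : ℕ) : ℕ := m.primeFactors.card

/-- The set of values `∑_{M ∈ 𝒩} [S : M]^(m-1)` as `𝒩` ranges over all coverings of `S`
(sets of proper subgroups of `S` whose union is `S`). -/
def coverSums (S : Type*) [Group S] (m : ℕ) : Set ℕ :=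
  {k | ∃ 𝒩 : Finset (Subgroup S), (∀ H ∈ 𝒩, H ≠ ⊤) ∧ (∀ x : S, ∃ H ∈ 𝒩, x ∈ H) ∧
    k = ∑ M ∈ 𝒩, M.index ^ (m - 1)}

/-- For a nonabelian finite simple group `S` and a positive integer `m`,
`σ(S ≀ C_m) ≤ α(m) + min_𝒩 ∑_{M ∈ 𝒩} [S : M]^(m-1)`, the minimum over all coverings `𝒩` of `S`. -/
theorem sigma_wreath_le (S : Type*) [Group S] [Fintype S] [IsSimpleGroup S]
    (hna : ∃ a b : S, a * b ≠ b * a) (m : ℕ) (hm : 0 < m) :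
    coveringNumber (WreathCyclic S m) ≤ alpha m + sInf (coverSums S m) := by
  classical
  haveI : NeZero m := ⟨hm.ne'⟩
  have hne : (coverSums S m).Nonempty := by
    haveI : Finite (Subgroup S) :=
      Finite.of_injective (fun H : Subgroup S => (H : Set S)) SetLike.coe_injective
    haveI := Fintype.ofFinite (Subgroup S)
    refine ⟨_, (Finset.univ.filter (fun H : Subgroup S => H ≠ ⊤)), ?_, ?_, rfl⟩
    · intro H hH; exact (Finset.mem_filter.mp hH).2
    · intro x
      refine ⟨Subgroup.zpowers x,
        Finset.mem_filter.mpr ⟨Finset.mem_univ _, ?_⟩, Subgroup.mem_zpowers x⟩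
      intro htop
      obtain ⟨a, b, hab⟩ := hna
      obtain ⟨n, hn⟩ := Subgroup.mem_zpowers_iff.mp (htop ▸ Subgroup.mem_top a)
      obtain ⟨j, hj⟩ := Subgroup.mem_zpowers_iff.mp (htop ▸ Subgroup.mem_top b)
      apply hab
      rw [← hn, ← hj, ← zpow_add, ← zpow_add, add_comm]
  obtain ⟨𝒩, h𝒩top, h𝒩cov, h𝒩sum⟩ := Nat.sInf_mem hne
  haveI : ∀ M : Subgroup S, Fintype (S ⧸ M) := fun M => Fintype.ofFinite _
  set A : Finset (Subgroup (WreathCyclic S m)) :=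
    m.primeFactors.image (fun p => primePart (S := S) m p) with hA
  set B : Finset (Subgroup (WreathCyclic S m)) :=
    𝒩.biUnion (fun M => (Finset.univ : Finset ({i : ZMod m // i ≠ 0} → S ⧸ M)).image
      (fun d => baseSG M (hfun M d))) with hB
  have hproper : ∀ H ∈ A ∪ B, H ≠ ⊤ := by
    intro H hH
    rcases Finset.mem_union.mp hH with h | h
    · obtain ⟨p, hp, rfl⟩ := Finset.mem_image.mp h
      exact primePart_ne_top (Nat.prime_of_mem_primeFactors hp) (Nat.dvd_of_mem_primeFactors hp)
    · obtain ⟨M, hM, h2⟩ := Finset.mem_biUnion.mp h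
      obtain ⟨d, _, rfl⟩ := Finset.mem_image.mp h2
      exact baseSG_ne_top (h𝒩top M hM) _
  have hcover : ∀ g : WreathCyclic S m, ∃ H ∈ A ∪ B, g ∈ H := by
    intro g
    by_cases hcop : Nat.Coprime (g.right.toAdd.val) m
    · obtain ⟨M, hM, d, hg⟩ := exists_mem_baseSG h𝒩cov g hcop
      exact ⟨baseSG M (hfun M d), Finset.mem_union_right _ (Finset.mem_biUnion.mpr
        ⟨M, hM, Finset.mem_image.mpr ⟨d, Finset.mem_univ _, rfl⟩⟩), hg⟩
    · have hgcd : Nat.gcd (g.right.toAdd.val) m ≠ 1 := hcop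
      obtain ⟨p, hp, hpd⟩ := Nat.exists_prime_and_dvd hgcd
      have hpm : p ∣ m := hpd.trans (Nat.gcd_dvd_right _ _)
      have hpk : p ∣ (g.right.toAdd.val) := hpd.trans (Nat.gcd_dvd_left _ _)
      refine ⟨primePart (S := S) m p, Finset.mem_union_left _ (Finset.mem_image.mpr
        ⟨p, Nat.mem_primeFactors.mpr ⟨hp, hpm, hm.ne'⟩, rfl⟩), ?_⟩
      rw [mem_primePart]
      obtain ⟨c, hc⟩ := hpk
      refine AddSubgroup.mem_zmultiples_iff.mpr ⟨c, ?_⟩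
      have hval : ((g.right.toAdd.val : ℕ) : ZMod m) = g.right.toAdd :=
        ZMod.natCast_rightInverse _
      rw [← hval, hc, natCast_zsmul, nsmul_eq_mul]
      push_cast
      ring
  have hcardA : A.card ≤ alpha m := Finset.card_image_le
  have hcardB : B.card ≤ ∑ M ∈ 𝒩, M.index ^ (m - 1) := by
    refine (Finset.card_biUnion_le).trans (Finset.sum_le_sum ?_)
    intro M hM
    refine (Finset.card_image_le).trans ?_
    rw [Finset.card_univ, Fintype.card_fun]
    have h1 : Fintype.card {i : ZMod m // i ≠ 0} = m - 1 := by
      rw [Fintype.card_subtype_compl, Fintype.card_subtype_eq, ZMod.card]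
    have h2 : Fintype.card (S ⧸ M) = M.index := by
      rw [Subgroup.index_eq_card, Nat.card_eq_fintype_card]
    rw [h1, h2]
  have h0 : coveringNumber (WreathCyclic S m) ≤ (A ∪ B).card :=
    Nat.sInf_le ⟨A ∪ B, rfl, hproper, hcover⟩
  calc coveringNumber (WreathCyclic S m) ≤ (A ∪ B).card := h0
    _ ≤ A.card + B.card := Finset.card_union_le _ _
    _ ≤ alpha m + sInf (coverSums S m) :=
        add_le_add hcardA (le_of_le_of_eq hcardB h𝒩sum.symm)
end

section
/- Let X be a finite group, Π a subset of X, and H a set of proper subgroups of X such that: (1) Π ∩ H ≠ ∅ for every H ∈ H; (2) Π ⊆ ∪_{H ∈ H} H; (3) Π ∩ H₁ ∩ H₂ = ∅ for every pair of distinct subgroups H₁, H₂ ∈ H; (4) |Π ∩ K| ≤ |Π ∩ H| for every H ∈ H and every proper subgroup K of X with K ∉ H. Then the least cardinality of a family of proper subgroups of X whose union contains Π equals |H|. -/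
open scoped Classical


/-- **Definite unbeatability.** If `ℋ` is a set of proper subgroups of a finite
group `X` that is definitely unbeatable on `Π ⊆ X` (conditions (1)–(4)), then the least
cardinality of a family of proper subgroups of `X` whose union contains `Π` equals `|ℋ|`. -/
theorem definitely_unbeatable (X : Type*) [Group X] [Fintype X]
    (Pi : Set X) (ℋ : Finset (Subgroup X))
    (hprop : ∀ H ∈ ℋ, H ≠ ⊤)
    (c1 : ∀ H ∈ ℋ, (Pi ∩ (H : Set X)).Nonempty)
    (c2 : Pi ⊆ ⋃ H ∈ ℋ, (H : Set X))
    (c3 : ∀ H₁ ∈ ℋ, ∀ H₂ ∈ ℋ, H₁ ≠ H₂ → Pi ∩ (H₁ : Set X) ∩ (H₂ : Set X) = ∅)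
    (c4 : ∀ H ∈ ℋ, ∀ K : Subgroup X, K ≠ ⊤ → K ∉ ℋ →
      Nat.card ↥(Pi ∩ (K : Set X)) ≤ Nat.card ↥(Pi ∩ (H : Set X))) :
    sInf {n | ∃ 𝒦 : Finset (Subgroup X), 𝒦.card = n ∧ (∀ K ∈ 𝒦, K ≠ ⊤) ∧
      Pi ⊆ ⋃ K ∈ 𝒦, (K : Set X)} = ℋ.card := by
  classical
  set S := {n | ∃ 𝒦 : Finset (Subgroup X), 𝒦.card = n ∧ (∀ K ∈ 𝒦, K ≠ ⊤) ∧
      Pi ⊆ ⋃ K ∈ 𝒦, (K : Set X)} with hS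
  have hmem : ℋ.card ∈ S := ⟨ℋ, rfl, hprop, c2⟩
  -- lower bound: every element of S is ≥ ℋ.card
  have hlb : ∀ n ∈ S, ℋ.card ≤ n := by
    rintro n ⟨𝒦, rfl, hKprop, hKcov⟩
    rcases ℋ.eq_empty_or_nonempty with he | hne
    · simp [he]
    -- finset version of the pieces
    set s : Subgroup X → Finset X := fun H => (Pi ∩ (H : Set X)).toFinset with hs
    have hncard : ∀ H : Subgroup X, Nat.card ↥(Pi ∩ (H : Set X)) = (s H).card := by
      intro H
      rw [Nat.card_coe_set_eq, Set.ncard_eq_toFinset_card']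
    -- minimal piece
    obtain ⟨H₀, hH₀, hmin⟩ := ℋ.exists_min_image (fun H => (s H).card) hne
    set m := (s H₀).card with hm
    have hmpos : 0 < m := by
      rw [hm, hs, Finset.card_pos]
      exact Set.toFinset_nonempty.mpr (c1 H₀ hH₀)
    -- Σ over ℋ ≤ |Π| (disjointness)
    have hdisj : ∀ H₁ ∈ ℋ, ∀ H₂ ∈ ℋ, H₁ ≠ H₂ → Disjoint (s H₁) (s H₂) := by
      intro H₁ h1 H₂ h2 hne12
      rw [Finset.disjoint_left]
      intro x hx1 hx2
      rw [hs, Set.mem_toFinset] at hx1 hx2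
      have : x ∈ Pi ∩ (H₁ : Set X) ∩ (H₂ : Set X) := ⟨hx1, hx2.2⟩
      rw [c3 H₁ h1 H₂ h2 hne12] at this
      exact this
    have hsum1 : ∑ H ∈ ℋ, (s H).card ≤ Pi.toFinset.card := by
      rw [← Finset.card_biUnion hdisj]
      apply Finset.card_le_card
      intro x hx
      rw [Finset.mem_biUnion] at hx
      obtain ⟨H, _, hxH⟩ := hx
      rw [hs, Set.mem_toFinset] at hxH
      rw [Set.mem_toFinset]
      exact hxH.1
    -- |Π| ≤ Σ over 𝒦
    have hsum2 : Pi.toFinset.card ≤ ∑ K ∈ 𝒦, (s K).card := by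
      calc Pi.toFinset.card ≤ (𝒦.biUnion s).card := by
            apply Finset.card_le_card
            intro x hx
            rw [Set.mem_toFinset] at hx
            obtain ⟨U, ⟨K, rfl⟩, hU⟩ := hKcov hx
            simp only [Set.mem_iUnion] at hU
            obtain ⟨hK, hxK⟩ := hU
            rw [Finset.mem_biUnion]
            exact ⟨K, hK, by rw [hs, Set.mem_toFinset]; exact ⟨hx, hxK⟩⟩
        _ ≤ ∑ K ∈ 𝒦, (s K).card := Finset.card_biUnion_le
    set A := 𝒦 ∩ ℋ with hA
    have hA𝒦 : A ⊆ 𝒦 := Finset.inter_subset_left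
    have hAℋ : A ⊆ ℋ := Finset.inter_subset_right
    -- pieces outside ℋ are small
    have hsmall : ∀ K ∈ 𝒦 \ A, (s K).card ≤ m := by
      intro K hK
      rw [Finset.mem_sdiff, hA, Finset.mem_inter] at hK
      have hKnot : K ∉ ℋ := fun h => hK.2 ⟨hK.1, h⟩
      have := c4 H₀ hH₀ K (hKprop K hK.1) hKnot
      rw [hncard, hncard] at this
      exact this
    have key : (ℋ \ A).card * m ≤ (𝒦 \ A).card * m := by
      calc (ℋ \ A).card * m ≤ ∑ H ∈ ℋ \ A, (s H).card := by
            rw [← Finset.sum_const_nat (fun _ _ => rfl)]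
            exact Finset.sum_le_sum fun H hH =>
              hmin H (Finset.mem_sdiff.mp hH).1
        _ ≤ ∑ K ∈ 𝒦 \ A, (s K).card := by
            have e1 : ∑ H ∈ ℋ \ A, (s H).card + ∑ H ∈ A, (s H).card
                = ∑ H ∈ ℋ, (s H).card := Finset.sum_sdiff hAℋ
            have e2 : ∑ K ∈ 𝒦 \ A, (s K).card + ∑ K ∈ A, (s K).card
                = ∑ K ∈ 𝒦, (s K).card := Finset.sum_sdiff hA𝒦
            omega
        _ ≤ ∑ _K ∈ 𝒦 \ A, m := Finset.sum_le_sum hsmall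
        _ = (𝒦 \ A).card * m := by rw [Finset.sum_const, smul_eq_mul]
    have hcard : (ℋ \ A).card ≤ (𝒦 \ A).card := Nat.le_of_mul_le_mul_right key hmpos
    rw [Finset.card_sdiff_of_subset hAℋ, Finset.card_sdiff_of_subset hA𝒦] at hcard
    have h1 := Finset.card_le_card hAℋ
    have h2 := Finset.card_le_card hA𝒦
    omega
  exact le_antisymm (Nat.sInf_le hmem) (hlb _ (Nat.sInf_mem ⟨_, hmem⟩))
end

section
/- Let p ≥ 11 be a prime and let m be a positive integer every prime divisor of which is at least 5 (so that m ≥ 5 when m > 1; assume m ≥ 5). Then (1 + α(m))·(p(p²−1)/2)^{m/5} ≤ φ((p+1)/2)·(p+1)^{m−1}, as an inequality of real numbers, where φ denotes Euler's totient function. -/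
lemma five_mul_le_pow (n : ℕ) : 5 * n ≤ 5 ^ n := by
  induction n with
  | zero => simp
  | succ k ih =>
    rcases Nat.eq_zero_or_pos k with hk | hk
    · subst hk; norm_num
    · have h1 : 5 ≤ 5 ^ k := Nat.le_self_pow hk.ne' 5
      have h2 : 5 ^ (k + 1) = 5 * 5 ^ k := by rw [pow_succ]; ring
      nlinarith

/-- For a prime `p ≥ 11` and an integer `m ≥ 5` all of whose prime divisors
are at least `5`, `(1 + α(m))·(p(p²-1)/2)^(m/5) ≤ φ((p+1)/2)·(p+1)^(m-1)` (over the reals). -/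
theorem psl_inequality (p : ℕ) (hp : p.Prime) (hp11 : 11 ≤ p)
    (m : ℕ) (hm : 5 ≤ m) (hdiv : ∀ q : ℕ, q.Prime → q ∣ m → 5 ≤ q) :
    (1 + (alpha m : ℝ)) * (((p : ℝ) * ((p : ℝ) ^ 2 - 1)) / 2) ^ ((m : ℝ) / 5) ≤
      (Nat.totient ((p + 1) / 2) : ℝ) * ((p : ℝ) + 1) ^ (m - 1) := by
  have hm0 : 0 < m := by omega
  have hprod : ∏ q ∈ m.primeFactors, q ∣ m := Nat.prod_primeFactors_dvd m
  have hpow : 5 ^ alpha m ≤ ∏ q ∈ m.primeFactors, q := by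
    apply Finset.pow_card_le_prod
    intro q hq
    exact hdiv q (Nat.prime_of_mem_primeFactors hq) (Nat.dvd_of_mem_primeFactors hq)
  have h5a : 5 * alpha m ≤ m :=
    le_trans (le_trans (five_mul_le_pow _) hpow) (Nat.le_of_dvd hm0 hprod)
  set t : ℝ := (m : ℝ) / 5 with ht
  have halpha : (alpha m : ℝ) ≤ t := by
    rw [ht, le_div_iff₀ (by norm_num)]
    exact_mod_cast (by omega : alpha m * 5 ≤ m)
  have ht1 : 1 ≤ t := by
    rw [ht, le_div_iff₀ (by norm_num)]
    exact_mod_cast (by omega : 1 * 5 ≤ m)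
  have hp' : (11 : ℝ) ≤ p := by exact_mod_cast hp11
  have hq12 : (12 : ℝ) ≤ (p : ℝ) + 1 := by linarith
  have hb0 : (0 : ℝ) ≤ (p : ℝ) + 1 := by linarith
  have hX0 : (0 : ℝ) ≤ ((p : ℝ) * ((p : ℝ) ^ 2 - 1)) / 2 := by nlinarith
  have hXle : ((p : ℝ) * ((p : ℝ) ^ 2 - 1)) / 2 ≤ ((p : ℝ) + 1) ^ 3 := by nlinarith
  have step1 : (((p : ℝ) * ((p : ℝ) ^ 2 - 1)) / 2) ^ t ≤ ((p : ℝ) + 1) ^ (3 * t) := by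
    calc (((p : ℝ) * ((p : ℝ) ^ 2 - 1)) / 2) ^ t ≤ (((p : ℝ) + 1) ^ (3 : ℕ)) ^ t :=
          Real.rpow_le_rpow hX0 hXle (by linarith)
      _ = ((p : ℝ) + 1) ^ (3 * t) := by
          rw [← Real.rpow_natCast ((p : ℝ) + 1) 3, ← Real.rpow_mul hb0]
          norm_num
  have hlog : (1 : ℝ) ≤ Real.log 12 := by
    rw [Real.le_log_iff_exp_le (by norm_num)]
    linarith [Real.exp_one_lt_d9]
  have key : 1 + (alpha m : ℝ) ≤ ((p : ℝ) + 1) ^ (2 * t - 1) := by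
    have h2 : 1 + t ≤ Real.exp t := by linarith [Real.add_one_le_exp t]
    have h3 : Real.exp t ≤ (12 : ℝ) ^ t := by
      rw [Real.rpow_def_of_pos (by norm_num)]
      apply Real.exp_le_exp.mpr
      nlinarith
    have h4 : (12 : ℝ) ^ t ≤ (12 : ℝ) ^ (2 * t - 1) :=
      Real.rpow_le_rpow_of_exponent_le (by norm_num) (by linarith)
    have h5 : (12 : ℝ) ^ (2 * t - 1) ≤ ((p : ℝ) + 1) ^ (2 * t - 1) :=
      Real.rpow_le_rpow (by norm_num) hq12 (by linarith)
    linarith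
  have hmain : (1 + (alpha m : ℝ)) * (((p : ℝ) * ((p : ℝ) ^ 2 - 1)) / 2) ^ t ≤
      ((p : ℝ) + 1) ^ (5 * t - 1) := by
    calc (1 + (alpha m : ℝ)) * (((p : ℝ) * ((p : ℝ) ^ 2 - 1)) / 2) ^ t
        ≤ ((p : ℝ) + 1) ^ (2 * t - 1) * ((p : ℝ) + 1) ^ (3 * t) :=
          mul_le_mul key step1 (Real.rpow_nonneg hX0 t)
            (Real.rpow_nonneg hb0 _)
      _ = ((p : ℝ) + 1) ^ (5 * t - 1) := by
          rw [← Real.rpow_add (by linarith)]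
          ring_nf
  have hnp : ((p : ℝ) + 1) ^ (5 * t - 1) = ((p : ℝ) + 1) ^ (m - 1 : ℕ) := by
    have h : 5 * t - 1 = ((m - 1 : ℕ) : ℝ) := by
      rw [ht, Nat.cast_sub (by omega)]
      push_cast
      ring
    rw [h, Real.rpow_natCast]
  have htot : (1 : ℝ) ≤ (Nat.totient ((p + 1) / 2) : ℝ) := by
    have : 0 < Nat.totient ((p + 1) / 2) := Nat.totient_pos.mpr (by omega)
    exact_mod_cast this
  calc (1 + (alpha m : ℝ)) * (((p : ℝ) * ((p : ℝ) ^ 2 - 1)) / 2) ^ ((m : ℝ) / 5)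
      ≤ ((p : ℝ) + 1) ^ (m - 1 : ℕ) := by rw [← hnp]; exact hmain
    _ ≤ (Nat.totient ((p + 1) / 2) : ℝ) * ((p : ℝ) + 1) ^ (m - 1) :=
        le_mul_of_one_le_left (pow_nonneg hb0 _) htot
end

section
/- Let n ≥ 5 be an odd composite integer with smallest prime divisor p, and let m be a positive integer. Then (1/(2^{m−1}·n))·(((n/p)!)^p · p!)^m ≤ (2/(n(n−2)))·(n!/2)^m, as an inequality of real numbers. -/
private lemma choose_mono_bottom (n : ℕ) : ∀ r s : ℕ, r ≤ s → s ≤ n / 2 →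
    n.choose r ≤ n.choose s := by
  intro r s hrs
  induction s, hrs using Nat.le_induction with
  | base => intro _; exact le_refl _
  | succ s hs ih =>
    intro hhalf
    exact le_trans (ih (le_trans (Nat.le_succ s) hhalf))
      (Nat.choose_le_succ_of_lt_half_left (lt_of_lt_of_le (Nat.lt_succ_self s) hhalf))

private lemma key_nat (p k : ℕ) (hp : 3 ≤ p) (hk : 3 ≤ k) :
    (Nat.factorial k) ^ p * Nat.factorial p * (p * k - 2) ≤ Nat.factorial (p * k) := by
  have hk0 : k ≠ 0 := by omega
  have hbell := Nat.uniformBell_mul_eq p hk0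
  have hpos : 0 < Nat.uniformBell p k := by
    by_contra h
    have h0 : Nat.uniformBell p k = 0 := by omega
    rw [h0] at hbell
    simp at hbell
    exact absurd hbell.symm (Nat.factorial_pos _).ne'
  have hstep : Nat.uniformBell p k =
      Nat.choose ((p - 1) * k + k - 1) (k - 1) * Nat.uniformBell (p - 1) k := by
    have h : p = (p - 1) + 1 := by omega
    nth_rewrite 1 [h]
    rw [Nat.uniformBell_succ_left]
  have hb1 : 0 < Nat.uniformBell (p - 1) k := by
    by_contra h
    have h0 : Nat.uniformBell (p - 1) k = 0 := by omega
    rw [hstep, h0, mul_zero] at hpos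
    exact absurd hpos (lt_irrefl 0)
  have harg : (p - 1) * k + k - 1 = p * k - 1 := by
    have : (p - 1) * k + k = p * k := by
      cases p with
      | zero => omega
      | succ q => simp [Nat.succ_mul]
    omega
  have hmono : Nat.choose (p * k - 1) 1 ≤ Nat.choose (p * k - 1) (k - 1) := by
    apply choose_mono_bottom
    · omega
    · have : 3 * k ≤ p * k := Nat.mul_le_mul_right k hp
      omega
  have hbig : p * k - 2 ≤ Nat.uniformBell p k := by
    calc p * k - 2 ≤ p * k - 1 := by omega
    _ = Nat.choose (p * k - 1) 1 := (Nat.choose_one_right _).symm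
    _ ≤ Nat.choose (p * k - 1) (k - 1) := hmono
    _ = Nat.choose ((p - 1) * k + k - 1) (k - 1) := by rw [harg]
    _ ≤ Nat.choose ((p - 1) * k + k - 1) (k - 1) * Nat.uniformBell (p - 1) k :=
        Nat.le_mul_of_pos_right _ hb1
    _ = Nat.uniformBell p k := hstep.symm
  calc Nat.factorial k ^ p * Nat.factorial p * (p * k - 2)
      ≤ Nat.factorial k ^ p * Nat.factorial p * Nat.uniformBell p k :=
        Nat.mul_le_mul_left _ hbig
    _ = Nat.uniformBell p k * Nat.factorial k ^ p * Nat.factorial p := by ring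
    _ = Nat.factorial (p * k) := hbell

/-- **Lemma 9 (1).** For `n ≥ 5` odd and composite with smallest prime divisor
`p`, and any positive integer `m`,
`(1/(2^(m-1)·n))·(((n/p)!)^p·p!)^m ≤ (2/(n(n-2)))·(n!/2)^m` (over the reals). -/
theorem odd_composite_inequality (n : ℕ) (hn : 5 ≤ n) (hodd : Odd n) (hcomp : ¬ n.Prime)
    (p : ℕ) (hp : p.Prime) (hpn : p ∣ n) (hmin : ∀ q : ℕ, q.Prime → q ∣ n → p ≤ q)
    (m : ℕ) (hm : 0 < m) :
    (1 / ((2 : ℝ) ^ (m - 1) * n)) * (((Nat.factorial (n / p) : ℝ) ^ p * Nat.factorial p) ^ m) ≤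
      (2 / ((n : ℝ) * ((n : ℝ) - 2))) * ((Nat.factorial n : ℝ) / 2) ^ m := by
  set k := n / p with hkdef
  have hpk : n = p * k := by
    rw [hkdef, Nat.mul_div_cancel' hpn]
  -- p is odd, so p ≥ 3
  have hp2 : p ≠ 2 := by
    rintro rfl
    exact (Nat.not_even_iff_odd.mpr hodd) ((even_iff_two_dvd).mpr hpn)
  have hp3 : 3 ≤ p := by
    have := hp.two_le
    omega
  -- k is odd and ≠ 1, so k ≥ 3
  have hkodd : Odd k := by
    rw [hpk, Nat.odd_mul] at hodd
    exact hodd.2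
  have hk1 : k ≠ 1 := by
    intro h
    rw [h, mul_one] at hpk
    exact hcomp (hpk ▸ hp)
  have hk3 : 3 ≤ k := by
    rcases hkodd with ⟨j, hj⟩
    omega
  have hkey_nat := key_nat p k hp3 hk3
  set A : ℝ := (Nat.factorial k : ℝ) ^ p * (Nat.factorial p : ℝ) with hAdef
  have hn9 : 9 ≤ n := by
    rw [hpk]; nlinarith
  have hkey : A * ((n : ℝ) - 2) ≤ (Nat.factorial n : ℝ) := by
    have h2 : 2 ≤ p * k := by nlinarith
    have := (Nat.cast_le (α := ℝ)).mpr hkey_nat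
    push_cast [Nat.cast_sub h2] at this
    rw [hpk]
    push_cast
    convert this using 2 <;> push_cast <;> ring
  have hA1 : (1 : ℝ) ≤ A := by
    rw [hAdef]
    have h1 : 1 ≤ Nat.factorial k ^ p * Nat.factorial p :=
      Nat.one_le_iff_ne_zero.mpr (by positivity)
    exact_mod_cast h1
  have hn2 : (1 : ℝ) ≤ (n : ℝ) - 2 := by
    have : (5 : ℝ) ≤ (n : ℝ) := by exact_mod_cast hn
    linarith
  have hpow : A ^ m * ((n : ℝ) - 2) ≤ (Nat.factorial n : ℝ) ^ m := by
    calc A ^ m * ((n : ℝ) - 2) ≤ A ^ m * ((n : ℝ) - 2) ^ m := by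
          apply mul_le_mul_of_nonneg_left (le_self_pow₀ (by linarith) hm.ne')
          positivity
      _ = (A * ((n : ℝ) - 2)) ^ m := (mul_pow _ _ _).symm
      _ ≤ (Nat.factorial n : ℝ) ^ m := by
          apply pow_le_pow_left₀ (by positivity) hkey
  obtain ⟨t, rfl⟩ : ∃ t, m = t + 1 := ⟨m - 1, by omega⟩
  have hnpos : (0 : ℝ) < (n : ℝ) := by positivity
  have hn2pos : (0 : ℝ) < (n : ℝ) - 2 := by linarith
  have hst : (t + 1) - 1 = t := by omega
  rw [hst]
  have hR : (2 / ((n : ℝ) * ((n : ℝ) - 2))) * ((Nat.factorial n : ℝ) / 2) ^ (t + 1)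
      = (Nat.factorial n : ℝ) ^ (t + 1) / (2 ^ t * (n : ℝ) * ((n : ℝ) - 2)) := by
    rw [div_pow]
    field_simp
    ring
  rw [hR, one_div_mul_eq_div, div_le_div_iff₀ (by positivity) (by positivity)]
  calc A ^ (t + 1) * (2 ^ t * (n : ℝ) * ((n : ℝ) - 2))
      = (A ^ (t + 1) * ((n : ℝ) - 2)) * (2 ^ t * (n : ℝ)) := by ring
    _ ≤ (Nat.factorial n : ℝ) ^ (t + 1) * (2 ^ t * (n : ℝ)) := by
        apply mul_le_mul_of_nonneg_right hpow
        positivity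
end

section
/- Let n ≥ 8 be an integer divisible by 4 and let m be a positive integer. Then ((n/2 − 2)!)·((n/2)!)·( ((n/2 − 1)!·((n/2) + 1)!)/2 )^{m−1} ≤ (4/(3(n−1)(n−3)))·(n!/2)^m, as an inequality of real numbers. -/
/-- **Lemma 9 (2).** For `n ≥ 8` divisible by `4` and any positive integer `m`,
`((n/2-2)!)·((n/2)!)·(((n/2-1)!·((n/2)+1)!)/2)^(m-1) ≤ (4/(3(n-1)(n-3)))·(n!/2)^m`
(over the reals). -/
theorem div_four_inequality (n : ℕ) (hn : 8 ≤ n) (h4 : 4 ∣ n) (m : ℕ) (hm : 0 < m) :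
    (Nat.factorial (n / 2 - 2) : ℝ) * (Nat.factorial (n / 2) : ℝ) *
        (((Nat.factorial (n / 2 - 1) : ℝ) * (Nat.factorial (n / 2 + 1) : ℝ)) / 2) ^ (m - 1) ≤
      (4 / (3 * ((n : ℝ) - 1) * ((n : ℝ) - 3))) * ((Nat.factorial n : ℝ) / 2) ^ m := by
  obtain ⟨j, rfl⟩ := h4
  obtain ⟨t, rfl⟩ : ∃ t, j = t + 2 := ⟨j - 2, by omega⟩
  set k : ℕ := 2 * (t + 2) with hk
  have hn2 : 4 * (t + 2) / 2 = k := by omega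
  rw [hn2]
  -- key nat inequality 1
  have h1 : (k - 1).factorial * (k + 1).factorial ≤ (4 * (t + 2)).factorial := by
    have hd := Nat.factorial_mul_factorial_dvd_factorial_add (k - 1) (k + 1)
    have he : k - 1 + (k + 1) = 4 * (t + 2) := by omega
    rw [he] at hd
    exact Nat.le_of_dvd (Nat.factorial_pos _) hd
  -- key nat inequality 2
  have h2 : 3 * (4 * (t + 2) - 1) * (4 * (t + 2) - 3) * ((k - 2).factorial * k.factorial)
      ≤ 2 * (4 * (t + 2)).factorial := by
    have hc : (4 * (t + 2)).choose k * k.factorial * k.factorial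
        = (4 * (t + 2)).factorial := by
      have h := Nat.choose_mul_factorial_mul_factorial (show k ≤ 4 * (t + 2) by omega)
      have h' : 4 * (t + 2) - k = k := by omega
      rw [h'] at h; exact h
    have hge : 4 * (t + 2) ≤ (4 * (t + 2)).choose k := by
      have h := Nat.choose_le_middle 1 (4 * (t + 2))
      have hh : 4 * (t + 2) / 2 = k := by omega
      rw [hh, Nat.choose_one_right] at h
      exact h
    have hfac : k.factorial = k * (k - 1) * (k - 2).factorial := by
      have e : k = 2 * t + 4 := by omega
      have e1 : k - 1 = 2 * t + 3 := by omega
      have e2 : k - 2 = 2 * t + 2 := by omega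
      rw [e1, e2, e, show 2 * t + 4 = (2 * t + 2) + 1 + 1 from by ring,
        Nat.factorial_succ, Nat.factorial_succ]
      ring
    calc 3 * (4 * (t + 2) - 1) * (4 * (t + 2) - 3) * ((k - 2).factorial * k.factorial)
        ≤ 2 * (4 * (t + 2)) * (k * (k - 1)) * ((k - 2).factorial * k.factorial) := by
          have : 3 * (4 * (t + 2) - 1) * (4 * (t + 2) - 3) ≤ 2 * (4 * (t + 2)) * (k * (k - 1)) := by
            have hk1 : k - 1 = 2 * t + 3 := by omega
            have hk2 : 4 * (t + 2) - 1 = 4 * t + 7 := by omega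
            have hk3 : 4 * (t + 2) - 3 = 4 * t + 5 := by omega
            rw [hk1, hk2, hk3, hk]
            nlinarith [sq_nonneg t, Nat.zero_le t]
          exact Nat.mul_le_mul_right _ this
      _ = 2 * ((4 * (t + 2)) * ((k - 2).factorial * (k * (k - 1) * k.factorial))) := by ring
      _ ≤ 2 * ((4 * (t + 2)).choose k * ((k - 2).factorial * (k * (k - 1) * k.factorial))) := by
          exact Nat.mul_le_mul_left _ (Nat.mul_le_mul_right _ hge)
      _ = 2 * ((4 * (t + 2)).choose k * k.factorial * k.factorial) := by
          rw [hfac]; ring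
      _ = 2 * (4 * (t + 2)).factorial := by rw [hc]
  -- now work in ℝ
  have hcast : ((4 * (t + 2) : ℕ) : ℝ) = 4 * (t : ℝ) + 8 := by push_cast; ring
  have hP : (0:ℝ) < 3 * (((4 * (t + 2) : ℕ) : ℝ) - 1) * (((4 * (t + 2) : ℕ) : ℝ) - 3) := by
    rw [hcast]
    have ht0 : (0:ℝ) ≤ (t:ℝ) := Nat.cast_nonneg t
    nlinarith
  set P : ℝ := 3 * (((4 * (t + 2) : ℕ) : ℝ) - 1) * (((4 * (t + 2) : ℕ) : ℝ) - 3) with hPdef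
  set D : ℝ := ((4 * (t + 2)).factorial : ℝ) / 2 with hDdef
  have hD0 : 0 ≤ D := by positivity
  have hbase : ((k - 1).factorial : ℝ) * ((k + 1).factorial : ℝ) / 2 ≤ D := by
    rw [hDdef]
    apply div_le_div_of_nonneg_right _ (by norm_num)
    · exact_mod_cast h1
  have hA : ((k - 2).factorial : ℝ) * (k.factorial : ℝ) ≤ 4 / P * D := by
    have h2' : P * (((k - 2).factorial : ℝ) * (k.factorial : ℝ))
        ≤ 2 * ((4 * (t + 2)).factorial : ℝ) := by
      have := h2
      have hc1 : ((4 * (t + 2) - 1 : ℕ) : ℝ) = ((4 * (t + 2) : ℕ) : ℝ) - 1 := by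
        push_cast [Nat.cast_sub (by omega : 1 ≤ 4 * (t + 2))]; ring
      have hc3 : ((4 * (t + 2) - 3 : ℕ) : ℝ) = ((4 * (t + 2) : ℕ) : ℝ) - 3 := by
        push_cast [Nat.cast_sub (by omega : 3 ≤ 4 * (t + 2))]; ring
      calc P * (((k - 2).factorial : ℝ) * (k.factorial : ℝ))
          = ((3 * (4 * (t + 2) - 1) * (4 * (t + 2) - 3) * ((k - 2).factorial * k.factorial) : ℕ) : ℝ) := by
            rw [hPdef]; push_cast [hc1, hc3]; ring
        _ ≤ ((2 * (4 * (t + 2)).factorial : ℕ) : ℝ) := by exact_mod_cast h2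
        _ = 2 * ((4 * (t + 2)).factorial : ℝ) := by push_cast; ring
    rw [hDdef, div_mul_div_comm]
    rw [le_div_iff₀ (by positivity)]
    calc ((k - 2).factorial : ℝ) * (k.factorial : ℝ) * (P * 2)
        = 2 * (P * (((k - 2).factorial : ℝ) * (k.factorial : ℝ))) := by ring
      _ ≤ 2 * (2 * ((4 * (t + 2)).factorial : ℝ)) := by linarith
      _ = 4 * ((4 * (t + 2)).factorial : ℝ) := by ring
  -- split the power
  obtain ⟨m', rfl⟩ : ∃ m', m = m' + 1 := ⟨m - 1, by omega⟩
  simp only [Nat.add_sub_cancel]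
  rw [pow_succ]
  calc ((k - 2).factorial : ℝ) * (k.factorial : ℝ) *
          (((k - 1).factorial : ℝ) * ((k + 1).factorial : ℝ) / 2) ^ m'
      ≤ (4 / P * D) * D ^ m' := by
        apply mul_le_mul hA _ (by positivity) (by positivity)
        exact pow_le_pow_left₀ (by positivity) hbase m'
    _ = 4 / P * (D ^ m' * D) := by ring
end

section
/- Let n ≥ 6 be an integer with n ≡ 2 (mod 4) and let m be a positive integer. Then (1/2^{m−1})·((n/2 − 1)!)²·((n/2)!)^{2m−2} ≤ (4/(3(n−1)(n−3)))·(n!/2)^m, as an inequality of real numbers. -/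
lemma six_mul_sq_le_fact : ∀ k, 3 ≤ k → 6 * (Nat.factorial k)^2 ≤ Nat.factorial (2*k) := by
  intro k hk
  induction k with
  | zero => omega
  | succ j ih =>
    rcases Nat.lt_or_ge j 3 with hj | hj
    · interval_cases j
      · omega
      · omega
      · decide
    · have h := ih (by omega)
      have h2 : 2 * (j+1) = (2*j+1) + 1 := by ring
      rw [h2, Nat.factorial_succ, Nat.factorial_succ]
      have hjj : (j+1)^2 ≤ (2*j+1+1) * (2*j+1) := by nlinarith
      calc 6 * (Nat.factorial (j+1))^2 = (j+1)^2 * (6 * (Nat.factorial j)^2) := by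
            rw [Nat.factorial_succ]; ring
        _ ≤ ((2*j+1+1) * (2*j+1)) * Nat.factorial (2*j) := by
            exact Nat.mul_le_mul hjj h
        _ = (2*j+1+1) * ((2*j+1) * Nat.factorial (2*j)) := by ring
        _ = (2*j+1+1) * Nat.factorial (2*j+1) := by rw [Nat.factorial_succ]

/-- **Lemma 9 (3).** For `n ≥ 6` with `n ≡ 2 (mod 4)` and any positive integer
`m`, `(1/2^(m-1))·((n/2-1)!)²·((n/2)!)^(2m-2) ≤ (4/(3(n-1)(n-3)))·(n!/2)^m` (over the reals). -/
theorem two_mod_four_inequality (n : ℕ) (hn : 6 ≤ n) (hn4 : n % 4 = 2) (m : ℕ) (hm : 0 < m) :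
    (1 / (2 : ℝ) ^ (m - 1)) * (Nat.factorial (n / 2 - 1) : ℝ) ^ 2 *
        (Nat.factorial (n / 2) : ℝ) ^ (2 * m - 2) ≤
      (4 / (3 * ((n : ℝ) - 1) * ((n : ℝ) - 3))) * ((Nat.factorial n : ℝ) / 2) ^ m := by
  obtain ⟨k, rfl⟩ : ∃ k, n = 2 * k := ⟨n / 2, by omega⟩
  have hk3 : 3 ≤ k := by omega
  have hnd : 2 * k / 2 = k := by omega
  rw [hnd]
  -- key nat facts
  have h6 : (6 : ℝ) * (Nat.factorial k : ℝ)^2 ≤ (Nat.factorial (2*k) : ℝ) := by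
    exact_mod_cast six_mul_sq_le_fact k hk3
  have hsq : ((Nat.factorial k : ℝ))^2 ≤ (Nat.factorial (2*k) : ℝ) := by nlinarith [sq_nonneg ((Nat.factorial k : ℝ))]
  have hkfact : (k : ℝ) * (Nat.factorial (k-1) : ℝ) = (Nat.factorial k : ℝ) := by
    exact_mod_cast Nat.mul_factorial_pred (by omega)
  have hkr : (3 : ℝ) ≤ (k : ℝ) := by exact_mod_cast hk3
  have hcast : ((2*k : ℕ) : ℝ) = 2 * (k : ℝ) := by push_cast; ring
  rw [hcast]
  have hD : 0 < 3 * (2*(k:ℝ) - 1) * (2*(k:ℝ) - 3) := by nlinarith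
  have hF : (0:ℝ) ≤ (Nat.factorial (k-1) : ℝ) := Nat.cast_nonneg _
  have hG : (0:ℝ) ≤ (Nat.factorial k : ℝ) := Nat.cast_nonneg _
  have hB : (0:ℝ) < (Nat.factorial (2*k) : ℝ) / 2 := by
    have := Nat.factorial_pos (2*k); positivity
  set F : ℝ := (Nat.factorial (k-1) : ℝ)
  set G : ℝ := (Nat.factorial k : ℝ)
  set B : ℝ := (Nat.factorial (2*k) : ℝ) / 2
  set C : ℝ := 4 / (3 * (2*(k:ℝ) - 1) * (2*(k:ℝ) - 3))
  have hC : 0 < C := by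
    apply div_pos (by norm_num) hD
  -- base case statement
  have base : F^2 ≤ C * B := by
    rw [show C * B = 4 * B / (3 * (2*(k:ℝ) - 1) * (2*(k:ℝ) - 3)) by rw [div_mul_eq_mul_div, mul_comm]]
    rw [le_div_iff₀ hD]
    have hFG : (k:ℝ)^2 * F^2 = G^2 := by rw [← hkfact]; ring
    have h12 : 3 * (2*(k:ℝ) - 1) * (2*(k:ℝ) - 3) ≤ 12 * (k:ℝ)^2 := by nlinarith
    have : F^2 * (3 * (2*(k:ℝ) - 1) * (2*(k:ℝ) - 3)) ≤ 12 * ((k:ℝ)^2 * F^2) := by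
      nlinarith [sq_nonneg F]
    calc F^2 * (3 * (2*(k:ℝ) - 1) * (2*(k:ℝ) - 3)) ≤ 12 * ((k:ℝ)^2 * F^2) := this
      _ = 2 * (6 * G^2) := by rw [hFG]; ring
      _ ≤ 2 * (Nat.factorial (2*k) : ℝ) := by nlinarith
      _ = 4 * B := by unfold B; ring
  -- inductive statement
  have main : ∀ t : ℕ, (1 / (2:ℝ)^t) * F^2 * G^(2*t) ≤ C * B^(t+1) := by
    intro t
    induction t with
    | zero => simpa using base
    | succ s ih =>
      have e1 : 2 * (s+1) = 2*s + 2 := by ring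
      have step : G^2 / 2 ≤ B := by
        unfold B
        linarith [hsq]
      calc (1 / (2:ℝ)^(s+1)) * F^2 * G^(2*(s+1))
          = ((1 / (2:ℝ)^s) * F^2 * G^(2*s)) * (G^2 / 2) := by
            rw [e1, pow_add, pow_succ]; ring
        _ ≤ (C * B^(s+1)) * (G^2 / 2) := by
            apply mul_le_mul_of_nonneg_right ih
            positivity
        _ ≤ (C * B^(s+1)) * B := by
            apply mul_le_mul_of_nonneg_left step
            positivity
        _ = C * B^(s+1+1) := by rw [pow_succ]; ring
  obtain ⟨t, rfl⟩ : ∃ t, m = t + 1 := ⟨m - 1, by omega⟩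
  have e2 : t + 1 - 1 = t := by omega
  have e3 : 2 * (t + 1) - 2 = 2 * t := by omega
  rw [e2, e3]
  exact main t
end

section
/- Let m ≥ 2 be an integer and let n be an odd integer whose smallest prime divisor p satisfies p³ ≤ n. Then (1 + α(m))·(n!/2)^{m/2} ≤ (1/(2^{m−1}·n))·(((n/p)!)^p · p!)^m, as an inequality of real numbers. -/
/-! Write `n = p * k`. The multinomial coefficient `n! / (k!)^p` is at most `p^n`, and Stirling's
bound `k! ≥ √(2πk) (k/e)^k` gives `k! ≥ k p^k` once `k ≥ 3p`, which `p³ ≤ n` guarantees for `p ≥ 3`.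
Together these give `2 n² n! ≤ ((k!)^p p!)²`, so `(n!/2)^(m/2) ≤ ((k!)^p p! / (2n))^m`, and the
factor `1 + α(m) ≤ 2^m` is absorbed by `(2n)^m / (2^(m-1) n) = 2 n^(m-1)`. -/
open Nat Real

lemma factorial_add_le_factorial_mul_pow (a b : ℕ) : (a + b)! ≤ a ! * (a + b) ^ b := by
  have h := Nat.factorial_mul_descFactorial (n := a + b) (k := b) (by omega)
  rw [Nat.add_sub_cancel] at h
  rw [← h]
  exact Nat.mul_le_mul_left _ (Nat.descFactorial_le_pow _ _)

lemma factorial_mul_le_factorial_pow_mul_pow (p : ℕ) :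
    ∀ k, (p * k)! ≤ k ! ^ p * p ^ (p * k)
  | 0 => by simp
  | k + 1 => by
    calc (p * (k + 1))! = (p * k + p)! := by rw [Nat.mul_succ]
      _ ≤ (p * k)! * (p * k + p) ^ p := factorial_add_le_factorial_mul_pow _ _
      _ ≤ k ! ^ p * p ^ (p * k) * (p * (k + 1)) ^ p := by
          rw [← Nat.mul_succ]; gcongr; exact factorial_mul_le_factorial_pow_mul_pow p k
      _ = (k + 1)! ^ p * p ^ (p * (k + 1)) := by
          rw [Nat.factorial_succ, mul_pow, mul_pow, Nat.mul_succ, pow_add]; ring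

lemma le_sqrt_two_pi_mul_mul_three_div_exp_one_pow (k : ℕ) :
    (k : ℝ) ≤ √(2 * π * k) * (3 / exp 1) ^ k := by
  have he : 1 + 1 / 10 ≤ 3 / exp 1 := by
    rw [le_div_iff₀ (exp_pos 1)]
    linarith [exp_one_lt_d9]
  have hpow : 1 + (k : ℝ) / 10 ≤ (3 / exp 1) ^ k := by
    calc 1 + (k : ℝ) / 10 = 1 + k * (1 / 10) := by ring
      _ ≤ (1 + 1 / 10) ^ k := one_add_mul_le_pow (by norm_num) k
      _ ≤ (3 / exp 1) ^ k := by gcongr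
  have hsqrt : 2 * √(k : ℝ) ≤ √(2 * π * k) := by
    rw [show (2 : ℝ) * √k = √(2 ^ 2 * k) by
      rw [Real.sqrt_mul (by norm_num), Real.sqrt_sq (by norm_num)]]
    gcongr
    linarith [pi_gt_three]
  set s := √(k : ℝ)
  have hs : s ^ 2 = k := Real.sq_sqrt (Nat.cast_nonneg k)
  have hs0 : 0 ≤ s := Real.sqrt_nonneg _
  calc (k : ℝ) ≤ 2 * s * (1 + k / 10) := by nlinarith [sq_nonneg (s - 5 / 2)]
    _ ≤ √(2 * π * k) * (3 / exp 1) ^ k := by gcongr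

lemma mul_pow_le_factorial_of_three_mul_le {p k : ℕ} (h : 3 * p ≤ k) : k * p ^ k ≤ k ! := by
  have hkp : 3 / exp 1 * p ≤ k / exp 1 := by
    rw [div_mul_eq_mul_div]; gcongr; exact_mod_cast h
  have key : (k : ℝ) * p ^ k ≤ k ! :=
    calc (k : ℝ) * p ^ k ≤ √(2 * π * k) * (3 / exp 1) ^ k * p ^ k := by
          gcongr; exact le_sqrt_two_pi_mul_mul_three_div_exp_one_pow k
      _ = √(2 * π * k) * (3 / exp 1 * p) ^ k := by ring
      _ ≤ √(2 * π * k) * (k / exp 1) ^ k := by gcongr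
      _ ≤ k ! := Stirling.le_factorial_stirling k
  exact_mod_cast key

lemma one_add_alpha_le_two_pow (m : ℕ) : 1 + alpha m ≤ 2 ^ m := by
  have h : alpha m ≤ m := by
    calc alpha m ≤ (Finset.Ioc 0 m).card := Finset.card_le_card fun q hq ↦
          Finset.mem_Ioc.mpr ⟨(Nat.prime_of_mem_primeFactors hq).pos, Nat.le_of_mem_primeFactors hq⟩
      _ = m := by simp
  have := Nat.lt_two_pow_self (n := m)
  omega

lemma rpow_div_two_le_pow {x b : ℝ} (hx : 0 ≤ x) (hb : 0 ≤ b) (h : x ≤ b ^ 2) (m : ℕ) :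
    x ^ ((m : ℝ) / 2) ≤ b ^ m :=
  calc x ^ ((m : ℝ) / 2) ≤ (b ^ 2) ^ ((m : ℝ) / 2) := by gcongr
    _ = b ^ m := by
      rw [← Real.rpow_natCast_mul hb, ← Real.rpow_natCast]; congr 1; push_cast; ring

lemma two_mul_sq_mul_factorial_le {p k : ℕ} (hp : 3 ≤ p) (hk : 3 * p ≤ k) :
    2 * (p * k) ^ 2 * (p * k)! ≤ (k ! ^ p * p !) ^ 2 := by
  have hpow : k ^ p * p ^ (p * k) ≤ k ! ^ p := by
    rw [pow_mul', ← mul_pow]; exact Nat.pow_le_pow_left (mul_pow_le_factorial_of_three_mul_le hk) p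
  have hsmall : 2 * (p * k) ^ 2 ≤ k ^ p * p ! ^ 2 :=
    calc 2 * (p * k) ^ 2 = p ^ 2 * (2 * k ^ 2) := by ring
      _ ≤ p ! ^ 2 * k ^ 3 := by
          gcongr
          · exact Nat.self_le_factorial p
          · nlinarith
      _ ≤ k ^ p * p ! ^ 2 := by rw [mul_comm]; gcongr; omega
  calc 2 * (p * k) ^ 2 * (p * k)! ≤ k ^ p * p ! ^ 2 * (k ! ^ p * p ^ (p * k)) :=
        Nat.mul_le_mul hsmall (factorial_mul_le_factorial_pow_mul_pow p k)
    _ = k ^ p * p ^ (p * k) * (k ! ^ p * p ! ^ 2) := by ring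
    _ ≤ k ! ^ p * (k ! ^ p * p ! ^ 2) := by gcongr
    _ = (k ! ^ p * p !) ^ 2 := by ring

lemma one_add_alpha_mul_le {m n : ℕ} (hm : 1 ≤ m) (hn : 2 ≤ n) :
    (1 + alpha m) * (2 ^ (m - 1) * n) ≤ (2 * n) ^ m :=
  calc (1 + alpha m) * (2 ^ (m - 1) * n) ≤ 2 ^ m * (n ^ (m - 1) * n) := by
        gcongr
        exact one_add_alpha_le_two_pow m
    _ = (2 * n) ^ m := by rw [← pow_succ, Nat.sub_add_cancel hm, mul_pow]

theorem diagonal_bound_odd_general (m : ℕ) (hm : 2 ≤ m) (n : ℕ) (hodd : Odd n)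
    (p : ℕ) (hp : p.Prime) (hpn : p ∣ n)
    (hp3 : p ^ 3 ≤ n) :
    (1 + (alpha m : ℝ)) * ((Nat.factorial n : ℝ) / 2) ^ ((m : ℝ) / 2) ≤
      (1 / ((2 : ℝ) ^ (m - 1) * n)) *
        (((Nat.factorial (n / p) : ℝ) ^ p * Nat.factorial p) ^ m) := by
  have hp_ge : 3 ≤ p := by
    obtain ⟨j, rfl⟩ := hodd.of_dvd_nat hpn
    have := hp.two_le
    omega
  obtain ⟨k, rfl⟩ := hpn
  have hk : 3 * p ≤ k := by
    have : p * p ≤ k := Nat.le_of_mul_le_mul_left (by nlinarith) (by omega : 0 < p)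
    nlinarith
  rw [Nat.mul_div_cancel_left k (by omega : 0 < p)]
  set A : ℝ := (k ! : ℝ) ^ p * (p ! : ℝ)
  have hn_pos : (0 : ℝ) < (p * k : ℕ) := by exact_mod_cast Nat.mul_pos (by omega) (by omega)
  have hA : 2 * ((p * k : ℕ) : ℝ) ^ 2 * (p * k)! ≤ A ^ 2 := by
    simp only [A]; exact_mod_cast two_mul_sq_mul_factorial_le hp_ge hk
  have hF : ((p * k)! : ℝ) / 2 ≤ (A / (2 * (p * k : ℕ))) ^ 2 := by
    rw [div_pow, le_div_iff₀ (by positivity)]; nlinarith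
  have hα : (1 + (alpha m : ℝ)) * (2 ^ (m - 1) * (p * k : ℕ)) ≤ (2 * (p * k : ℕ)) ^ m := by
    exact_mod_cast one_add_alpha_mul_le (by omega) (by nlinarith)
  calc (1 + (alpha m : ℝ)) * (((p * k)! : ℝ) / 2) ^ ((m : ℝ) / 2)
      ≤ (1 + (alpha m : ℝ)) * (A / (2 * (p * k : ℕ))) ^ m := by
        gcongr; exact rpow_div_two_le_pow (by positivity) (by positivity) hF m
    _ ≤ 1 / (2 ^ (m - 1) * (p * k : ℕ)) * A ^ m := by
        rw [div_pow, mul_div_assoc', one_div_mul_eq_div,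
          div_le_div_iff₀ (by positivity) (by positivity)]
        nlinarith [pow_pos (show 0 < A by positivity) m]

/-- **Lemma 11 (1).** For `m ≥ 2` and `n` odd with smallest prime divisor `p`
satisfying `p³ ≤ n`, `(1 + α(m))·(n!/2)^(m/2) ≤ (1/(2^(m-1)·n))·(((n/p)!)^p·p!)^m`
(over the reals, the exponent `m/2` being a real exponent). -/
theorem diagonal_bound_odd (m : ℕ) (hm : 2 ≤ m) (n : ℕ) (hodd : Odd n)
    (p : ℕ) (hp : p.Prime) (hpn : p ∣ n) (hmin : ∀ q : ℕ, q.Prime → q ∣ n → p ≤ q)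
    (hp3 : p ^ 3 ≤ n) :
    (1 + (alpha m : ℝ)) * ((Nat.factorial n : ℝ) / 2) ^ ((m : ℝ) / 2) ≤
      (1 / ((2 : ℝ) ^ (m - 1) * n)) *
        (((Nat.factorial (n / p) : ℝ) ^ p * Nat.factorial p) ^ m) :=
  diagonal_bound_odd_general m hm n hodd p hp hpn hp3
end

section
/- Let m ≥ 2 be an integer and let n > 10 be an integer with n ≡ 2 (mod 4). Then (1 + α(m))·(n!/2)^{m/2} ≤ (1/2^{m−1})·((n/2 − 1)!)²·((n/2)!)^{2m−2}, as an inequality of real numbers. -/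
open Nat

theorem alpha_lt_self {m : ℕ} (hm : m ≠ 0) : alpha m < m := by
  have hsub : m.primeFactors ⊆ Finset.Icc 2 m := fun p hp =>
    Finset.mem_Icc.2 ⟨(prime_of_mem_primeFactors hp).two_le, le_of_mem_primeFactors hp⟩
  have := Finset.card_le_card hsub
  rw [Nat.card_Icc] at this
  unfold alpha
  omega

theorem two_mul_sq_mul_factorial_two_mul_le {k : ℕ} (hk : 7 ≤ k) :
    2 * k ^ 2 * (2 * k)! ≤ k ! ^ 4 := by
  induction k, hk using Nat.le_induction with
  | base => decide
  | succ k hk ih =>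
    have hstep : (2 * k + 2) * (2 * k + 1) ≤ k ^ 2 * (k + 1) ^ 2 := by nlinarith
    refine Nat.le_of_mul_le_mul_left ?_ (by positivity : 0 < k ^ 2)
    calc k ^ 2 * (2 * (k + 1) ^ 2 * (2 * (k + 1))!)
        = (k + 1) ^ 2 * ((2 * k + 2) * (2 * k + 1)) * (2 * k ^ 2 * (2 * k)!) := by
          rw [show 2 * (k + 1) = 2 * k + 1 + 1 by ring, factorial_succ, factorial_succ]; ring
      _ ≤ (k + 1) ^ 2 * (k ^ 2 * (k + 1) ^ 2) * k ! ^ 4 := by gcongr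
      _ = k ^ 2 * (k + 1)! ^ 4 := by rw [factorial_succ]; ring

theorem mul_sq_le_two_mul_pow {k m : ℕ} (hk : 2 ≤ k) (hm : 2 ≤ m) :
    m * k ^ 2 ≤ 2 * k ^ m := by
  induction m, hm using Nat.le_induction with
  | base => rw [mul_comm]
  | succ m hm ih =>
    calc (m + 1) * k ^ 2 ≤ (k * m) * k ^ 2 := by gcongr; nlinarith
      _ = k * (m * k ^ 2) := by ring
      _ ≤ k * (2 * k ^ m) := by gcongr
      _ = 2 * k ^ (m + 1) := by ring

theorem two_mul_mul_sqrt_factorial_le {k : ℕ} (hk : 7 ≤ k) :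
    2 * k * √((2 * k)! / 2 : ℝ) ≤ (k ! : ℝ) ^ 2 := by
  refine le_of_pow_le_pow_left₀ two_ne_zero (by positivity) ?_
  rw [mul_pow, Real.sq_sqrt (by positivity), ← pow_mul]
  calc (2 * k : ℝ) ^ 2 * ((2 * k)! / 2) = ((2 * k ^ 2 * (2 * k)! : ℕ) : ℝ) := by
        push_cast; ring
    _ ≤ ((k ! ^ 4 : ℕ) : ℝ) := by exact_mod_cast two_mul_sq_mul_factorial_two_mul_le hk
    _ = (k ! : ℝ) ^ (2 * 2) := by push_cast; rfl

/-- **Lemma 11 (3).** For `m ≥ 2` and `n > 10` with `n ≡ 2 (mod 4)`,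
`(1 + α(m))·(n!/2)^(m/2) ≤ (1/2^(m-1))·((n/2-1)!)²·((n/2)!)^(2m-2)`
(over the reals, the exponent `m/2` being a real exponent). -/
theorem diagonal_bound_two_mod_four (m : ℕ) (hm : 2 ≤ m) (n : ℕ) (hn : 10 < n)
    (hn4 : n % 4 = 2) :
    (1 + (alpha m : ℝ)) * ((Nat.factorial n : ℝ) / 2) ^ ((m : ℝ) / 2) ≤
      (1 / (2 : ℝ) ^ (m - 1)) * (Nat.factorial (n / 2 - 1) : ℝ) ^ 2 *
        (Nat.factorial (n / 2) : ℝ) ^ (2 * m - 2) := by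
  obtain ⟨k, rfl⟩ : ∃ k, n = 2 * k := ⟨n / 2, by omega⟩
  have hk : 7 ≤ k := by omega
  rw [Nat.mul_div_cancel_left k two_pos, Real.rpow_div_two_eq_sqrt _ (by positivity),
    Real.rpow_natCast, mul_assoc, one_div, ← div_eq_inv_mul, le_div_iff₀' (by positivity)]
  set b := √((2 * k)! / 2 : ℝ)
  have halpha : 1 + (alpha m : ℝ) ≤ m := by
    exact_mod_cast Nat.one_add_le_iff.2 (alpha_lt_self (by omega))
  have hpow : (m : ℝ) * k ^ 2 ≤ 2 * k ^ m := by
    exact_mod_cast mul_sq_le_two_mul_pow (by omega) hm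
  have htwo : (2 : ℝ) ^ (m - 1) * 2 = 2 ^ m := pow_sub_one_mul (by omega) 2
  have hfact : (k ! : ℝ) ^ (2 * m) = k ^ 2 * ((k - 1)! ^ 2 * k ! ^ (2 * m - 2)) := by
    rw [show 2 * m = 2 + (2 * m - 2) by omega, pow_add, Nat.add_sub_cancel_left,
      ← mul_factorial_pred (by omega : k ≠ 0)]
    push_cast
    ring
  refine le_of_mul_le_mul_left ?_ (by positivity : (0 : ℝ) < k ^ 2)
  calc (k : ℝ) ^ 2 * (2 ^ (m - 1) * ((1 + alpha m) * b ^ m))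
      ≤ k ^ 2 * (2 ^ (m - 1) * (m * b ^ m)) := by gcongr
    _ = 2 ^ (m - 1) * (m * k ^ 2) * b ^ m := by ring
    _ ≤ 2 ^ (m - 1) * (2 * k ^ m) * b ^ m := by gcongr
    _ = (2 * k * b) ^ m := by rw [mul_pow, mul_pow, ← htwo]; ring
    _ ≤ ((k ! : ℝ) ^ 2) ^ m := by gcongr; exact two_mul_mul_sqrt_factorial_le hk
    _ = k ^ 2 * ((k - 1)! ^ 2 * k ! ^ (2 * m - 2)) := by rw [← pow_mul, hfact]
end

section
/- Let n > 10 be an even integer and let a be the smallest divisor of n that is greater than 2. Then n·((n/a)!)^a·a! ≤ 2·((n/2)!)². -/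
open Nat

/-- Case a = 3: n = 6m, m ≥ 2. -/
lemma case3_aux : ∀ m : ℕ, 2 ≤ m → 18 * m * ((2*m)!)^3 ≤ ((3*m)!)^2 := by
  intro m hm
  induction m, hm using Nat.le_induction with
  | base => decide
  | succ m hm ih =>
    have h2 : (2*(m+1))! = (2*m+2) * ((2*m+1) * (2*m)!) := by
      have e : 2*(m+1) = (2*m+1)+1 := by ring
      rw [e, Nat.factorial_succ, Nat.factorial_succ]
    have h3 : (3*(m+1))! = (3*m+3) * ((3*m+2) * ((3*m+1) * (3*m)!)) := by
      have e : 3*(m+1) = ((3*m+1)+1)+1 := by ring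
      rw [e, Nat.factorial_succ, Nat.factorial_succ, Nat.factorial_succ]
    have key : 18 * (m+1) * ((2*m+2)*(2*m+1))^3 ≤ (18 * m) * ((3*m+3)*((3*m+2)*(3*m+1)))^2 := by
      have hX : (2*m+2)*(2*m+1) ≤ 4*((m+1)^2) := by nlinarith
      have hY : 27*(m*(m+1)^2) ≤ (3*m+3)*((3*m+2)*(3*m+1)) := by nlinarith
      have hc : 4*(m+1) ≤ 9*m := by omega
      calc 18 * (m+1) * ((2*m+2)*(2*m+1))^3
          ≤ 18 * (m+1) * (4*((m+1)^2))^3 :=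
            Nat.mul_le_mul_left _ (Nat.pow_le_pow_left hX 3)
        _ = 18*(m+1)^4 * (4*(m+1))^3 := by ring
        _ ≤ 18*(m+1)^4 * (9*m)^3 := Nat.mul_le_mul_left _ (Nat.pow_le_pow_left hc 3)
        _ = (18*m) * (27*(m*(m+1)^2))^2 := by ring
        _ ≤ (18*m) * ((3*m+3)*((3*m+2)*(3*m+1)))^2 :=
            Nat.mul_le_mul_left _ (Nat.pow_le_pow_left hY 2)
    calc 18 * (m+1) * ((2*(m+1))!)^3
        = (18 * (m+1) * ((2*m+2)*(2*m+1))^3) * ((2*m)!)^3 := by rw [h2]; ring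
      _ ≤ ((18 * m) * ((3*m+3)*((3*m+2)*(3*m+1)))^2) * ((2*m)!)^3 :=
          Nat.mul_le_mul_right _ key
      _ = ((3*m+3)*((3*m+2)*(3*m+1)))^2 * (18 * m * ((2*m)!)^3) := by ring
      _ ≤ ((3*m+3)*((3*m+2)*(3*m+1)))^2 * ((3*m)!)^2 := Nat.mul_le_mul_left _ ih
      _ = ((3*(m+1))!)^2 := by rw [h3]; ring

/-- Case a = 4: n = 4m, m ≥ 3. -/
lemma case4_aux : ∀ m : ℕ, 3 ≤ m → 48 * m * (m !)^4 ≤ ((2*m)!)^2 := by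
  intro m hm
  induction m, hm using Nat.le_induction with
  | base => decide
  | succ m hm ih =>
    have h2 : (2*(m+1))! = (2*m+2) * ((2*m+1) * (2*m)!) := by
      have e : 2*(m+1) = (2*m+1)+1 := by ring
      rw [e, Nat.factorial_succ, Nat.factorial_succ]
    have key : 48 * (m+1) * (m+1)^4 ≤ (48 * m) * ((2*m+2)*(2*m+1))^2 := by
      nlinarith [hm, sq_nonneg m]
    calc 48 * (m+1) * ((m+1)!)^4
        = (48 * (m+1) * (m+1)^4) * (m !)^4 := by rw [Nat.factorial_succ]; ring
      _ ≤ ((48 * m) * ((2*m+2)*(2*m+1))^2) * (m !)^4 := Nat.mul_le_mul_right _ key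
      _ = ((2*m+2)*(2*m+1))^2 * (48 * m * (m !)^4) := by ring
      _ ≤ ((2*m+2)*(2*m+1))^2 * ((2*m)!)^2 := Nat.mul_le_mul_left _ ih
      _ = ((2*(m+1))!)^2 := by rw [h2]; ring

/-- Case n = 2a: a·2^a ≤ a! for a ≥ 6. -/
lemma twopow_aux : ∀ a : ℕ, 6 ≤ a → a * 2^a ≤ a ! := by
  intro a ha
  induction a, ha using Nat.le_induction with
  | base => decide
  | succ a ha ih =>
    have h1 : 2 * 2^a ≤ a * 2^a := Nat.mul_le_mul_right _ (by omega)
    calc (a+1) * 2^(a+1) = (a+1) * (2 * 2^a) := by ring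
      _ ≤ (a+1) * (a * 2^a) := Nat.mul_le_mul_left _ h1
      _ ≤ (a+1) * a ! := Nat.mul_le_mul_left _ ih
      _ = (a+1)! := (Nat.factorial_succ a).symm

/-- Base of induction on a for the general case a ≥ 5. -/
lemma Q5_aux : ∀ t : ℕ, 2 ≤ t → 5 * t * ((2*t)!)^5 * (5 !) ≤ ((5*t)!)^2 := by
  intro t ht
  induction t, ht using Nat.le_induction with
  | base => decide
  | succ t ht ih =>
    have h2 : (2*(t+1))! = (2*t+2) * ((2*t+1) * (2*t)!) := by
      have e : 2*(t+1) = (2*t+1)+1 := by ring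
      rw [e, Nat.factorial_succ, Nat.factorial_succ]
    have h5 : (5*t)! * (5*t)^5 ≤ (5*(t+1))! := by
      have e : 5*(t+1) = 5*t + 5 := by ring
      rw [e]
      calc (5*t)! * (5*t)^5 ≤ (5*t)! * (5*t+1)^5 :=
            Nat.mul_le_mul_left _ (Nat.pow_le_pow_left (Nat.le_succ _) 5)
        _ ≤ (5*t+5)! := Nat.factorial_mul_pow_le_factorial
    have key : 5 * (t+1) * ((2*t+2)*(2*t+1))^5 * (5 !) ≤ (5 * t * (5 !)) * ((5*t)^5)^2 := by
      have hb : (2*t+2)*(2*t+1) ≤ 16 * t^2 := by nlinarith [ht]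
      have hb5 : ((2*t+2)*(2*t+1))^5 ≤ (16 * t^2)^5 := Nat.pow_le_pow_left hb 5
      have h1 : 5 * (t+1) * ((2*t+2)*(2*t+1))^5 * (5 !) ≤ 5 * (2*t) * ((16*t^2)^5) * (5 !) :=
        Nat.mul_le_mul_right _
          (Nat.mul_le_mul (Nat.mul_le_mul_left 5 (by omega : t+1 ≤ 2*t)) hb5)
      refine h1.trans ?_
      have e1 : 5 * (2*t) * (16*t^2)^5 * (5 !) = (5 * t * (5 !)) * (2 * 16^5 * t^10) := by ring
      rw [e1]
      have e2 : (5 * t * (5 !)) * (2 * 16^5 * t^10) ≤ (5 * t * (5 !)) * (5^10 * t^10) :=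
        Nat.mul_le_mul_left _ (Nat.mul_le_mul_right _ (by norm_num))
      refine e2.trans (Nat.le_of_eq ?_)
      ring
    calc 5 * (t+1) * ((2*(t+1))!)^5 * (5 !)
        = (5 * (t+1) * ((2*t+2)*(2*t+1))^5 * (5 !)) * ((2*t)!)^5 := by rw [h2]; ring
      _ ≤ ((5 * t * (5 !)) * ((5*t)^5)^2) * ((2*t)!)^5 := Nat.mul_le_mul_right _ key
      _ = ((5*t)^5)^2 * (5 * t * ((2*t)!)^5 * (5 !)) := by ring
      _ ≤ ((5*t)^5)^2 * ((5*t)!)^2 := Nat.mul_le_mul_left _ ih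
      _ = ((5*t)! * (5*t)^5)^2 := by ring
      _ ≤ ((5*(t+1))!)^2 := Nat.pow_le_pow_left h5 2

/-- General case: a ≥ 5, t ≥ 2. -/
lemma Qall_aux : ∀ a : ℕ, 5 ≤ a → ∀ t : ℕ, 2 ≤ t →
    a * t * ((2*t)!)^a * (a !) ≤ ((a*t)!)^2 := by
  intro a ha
  induction a, ha using Nat.le_induction with
  | base => exact Q5_aux
  | succ a ha ih =>
    intro t ht
    have ihc := ih t ht
    have hfac : (a*t)! * (a*t)^t ≤ ((a+1)*t)! := by
      have e : (a+1)*t = a*t + t := by ring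
      rw [e]
      calc (a*t)! * (a*t)^t ≤ (a*t)! * (a*t+1)^t :=
            Nat.mul_le_mul_left _ (Nat.pow_le_pow_left (Nat.le_succ _) t)
        _ ≤ (a*t+t)! := Nat.factorial_mul_pow_le_factorial
    have key : (a+1)^2 * ((2*t)!) ≤ a * ((a*t)^t)^2 := by
      have h1 : (2*t)! ≤ (2*t)^(2*t) := Nat.factorial_le_pow _
      have h2 : (a+1)^2 ≤ 4 * a^2 := by nlinarith
      have h3 : (4:ℕ)^(t+1) ≤ a^(2*t-1) := by
        calc (4:ℕ)^(t+1) ≤ 4^(2*t-1) := Nat.pow_le_pow_right (by norm_num) (by omega)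
          _ ≤ a^(2*t-1) := Nat.pow_le_pow_left (by omega) _
      calc (a+1)^2 * ((2*t)!) ≤ (4 * a^2) * (2*t)^(2*t) := Nat.mul_le_mul h2 h1
        _ = (4^(t+1) * a^2) * t^(2*t) := by
            rw [Nat.mul_pow]
            have e2 : (2:ℕ)^(2*t) = 4^t := by
              rw [pow_mul]; norm_num
            rw [e2]; ring
        _ ≤ (a^(2*t-1) * a^2) * t^(2*t) :=
            Nat.mul_le_mul_right _ (Nat.mul_le_mul_right _ h3)
        _ = a * (a^(2*t) * t^(2*t)) := by
            rw [← Nat.pow_add]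
            have e3 : 2*t-1+2 = 1 + 2*t := by omega
            rw [e3, Nat.pow_add, pow_one]
            ring
        _ = a * ((a*t)^t)^2 := by
            rw [← Nat.mul_pow, ← Nat.pow_mul]
            ring_nf
    calc (a+1) * t * ((2*t)!)^(a+1) * ((a+1)!)
        = ((a+1)^2 * ((2*t)!)) * (t * ((2*t)!)^a * (a !)) := by
          rw [Nat.factorial_succ, pow_succ]; ring
      _ ≤ (a * ((a*t)^t)^2) * (t * ((2*t)!)^a * (a !)) := Nat.mul_le_mul_right _ key
      _ = ((a*t)^t)^2 * (a * t * ((2*t)!)^a * (a !)) := by ring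
      _ ≤ ((a*t)^t)^2 * ((a*t)!)^2 := Nat.mul_le_mul_left _ ihc
      _ = ((a*t)! * (a*t)^t)^2 := by ring
      _ ≤ (((a+1)*t)!)^2 := Nat.pow_le_pow_left hfac 2

/-- **Lemma 12.** For `n > 10` even and `a` the smallest divisor of `n` greater
than `2`, `n·((n/a)!)^a·a! ≤ 2·((n/2)!)²`. -/
theorem smallest_divisor_inequality (n : ℕ) (hn : 10 < n) (heven : Even n)
    (a : ℕ) (ha : a ∣ n) (ha2 : 2 < a) (hamin : ∀ b : ℕ, b ∣ n → 2 < b → a ≤ b) :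
    n * Nat.factorial (n / a) ^ a * Nat.factorial a ≤ 2 * Nat.factorial (n / 2) ^ 2 := by
  have h2n : 2 ∣ n := heven.two_dvd
  by_cases h3 : 3 ∣ n
  · -- a = 3
    have ha3 : a = 3 := le_antisymm (hamin 3 h3 (by norm_num)) ha2
    subst ha3
    obtain ⟨m, hm⟩ : 6 ∣ n := Nat.Coprime.mul_dvd_of_dvd_of_dvd (by norm_num) h2n h3
    have hm2 : 2 ≤ m := by omega
    have e3 : n / 3 = 2 * m := by omega
    have e2 : n / 2 = 3 * m := by omega
    rw [e3, e2, hm]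
    calc 6 * m * ((2*m)!)^3 * (3 !) = 2 * (18 * m * ((2*m)!)^3) := by
          rw [show (3:ℕ)! = 6 from rfl]; ring
      _ ≤ 2 * ((3*m)!)^2 := Nat.mul_le_mul_left _ (case3_aux m hm2)
  · by_cases h4 : 4 ∣ n
    · -- a = 4
      have ha4 : a = 4 := by
        have h1 : a ≤ 4 := hamin 4 h4 (by norm_num)
        interval_cases a
        · exact absurd ha h3
        · rfl
      subst ha4
      obtain ⟨m, hm⟩ := h4
      have hm3 : 3 ≤ m := by omega
      have e4 : n / 4 = m := by omega
      have e2 : n / 2 = 2 * m := by omega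
      rw [e4, e2, hm]
      calc 4 * m * (m !)^4 * (4 !) = 2 * (48 * m * (m !)^4) := by
            rw [show (4:ℕ)! = 24 from rfl]; ring
        _ ≤ 2 * ((2*m)!)^2 := Nat.mul_le_mul_left _ (case4_aux m hm3)
    · -- a ≥ 5 and a is odd
      obtain ⟨m, hm⟩ := h2n
      have hmodd : ¬ 2 ∣ m := fun ⟨c, hc⟩ => h4 ⟨c, by omega⟩
      have ha5 : 5 ≤ a := by
        rcases Nat.lt_or_ge a 5 with h | h
        · interval_cases a
          · exact absurd ha h3
          · exact absurd ha h4
        · exact h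
      have haodd : a % 2 = 1 := by
        rcases Nat.even_or_odd a with he | ho
        · exfalso
          obtain ⟨c, hc⟩ := he
          have hcm : c ∣ m := by
            rcases ha with ⟨d, hd⟩
            refine ⟨d, ?_⟩
            have h2m : 2*m = 2*(c*d) := by rw [← hm, hd, hc]; ring
            exact Nat.eq_of_mul_eq_mul_left (by norm_num) h2m
          have hcn : c ∣ n := hcm.trans ⟨2, by omega⟩
          have hcodd : ¬ 2 ∣ c := fun hh => hmodd (hh.trans hcm)
          have hc3 : 2 < c := by omega
          have := hamin c hcn hc3
          omega
        · exact Nat.odd_iff.mp ho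
      have hcop : Nat.Coprime a 2 :=
        Nat.coprime_comm.mp ((Nat.prime_two.coprime_iff_not_dvd).mpr (by omega))
      have ham : a ∣ m := hcop.dvd_of_dvd_mul_left (by rw [← hm]; exact ha)
      obtain ⟨t, htm⟩ := ham
      have ht1 : 1 ≤ t := by
        rcases Nat.eq_zero_or_pos t with h | h
        · subst h; simp at htm; omega
        · exact h
      have hea : n / a = 2 * t := by
        have e : n = a * (2*t) := by rw [hm, htm]; ring
        rw [e, Nat.mul_div_cancel_left _ (by omega : 0 < a)]
      have he2 : n / 2 = a * t := by omega
      rw [hea, he2, hm, htm]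
      rcases Nat.lt_or_ge t 2 with ht | ht
      · -- t = 1
        have ht1' : t = 1 := by omega
        subst ht1'
        have ha6 : 6 ≤ a := by omega
        have h := twopow_aux a ha6
        calc 2 * (a * 1) * ((2*1)!)^a * (a !) = 2 * ((a * 2^a) * (a !)) := by
              rw [show ((2*1:ℕ))! = 2 from rfl]; ring
          _ ≤ 2 * ((a !) * (a !)) :=
              Nat.mul_le_mul_left _ (Nat.mul_le_mul_right _ h)
          _ = 2 * ((a * 1)!)^2 := by rw [Nat.mul_one]; ring
      · have h := Qall_aux a ha5 t ht
        calc 2 * (a * t) * ((2*t)!)^a * (a !) = 2 * (a * t * ((2*t)!)^a * (a !)) := by ring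
          _ ≤ 2 * ((a*t)!)^2 := Nat.mul_le_mul_left _ h
end

section
/- Let m ≥ 2 be an integer, let n > 10 be an integer divisible by 4, and let a be the smallest divisor of n that is greater than 2. Then (1 + α(m))·( ((n/a)!)^a·a!/2 )^m ≤ ((n/2 − 2)!)·((n/2)!)·( ((n/2 − 1)!·((n/2) + 1)!)/2 )^{m−1}, as an inequality of real numbers. -/
lemma fs_aux (n k : ℕ) (h : n = k+1) : n.factorial = n * k.factorial := by
  subst h; rw [Nat.factorial_succ]

lemma a4i_aux (u : ℕ) : 48 * (u+3).factorial ^ 4 ≤ (2*u+5).factorial * (2*u+7).factorial := by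
  induction u with
  | zero => norm_num [Nat.factorial]
  | succ u ih =>
    simp only [fs_aux (2*u+7) (2*u+6) (by omega), fs_aux (2*u+6) (2*u+5) (by omega)] at ih
    simp only [fs_aux (u+1+3) (u+3) (by omega),
      fs_aux (2*(u+1)+5) (2*u+6) (by omega), fs_aux (2*(u+1)+7) (2*u+8) (by omega),
      fs_aux (2*u+8) (2*u+7) (by omega), fs_aux (2*u+7) (2*u+6) (by omega),
      fs_aux (2*u+6) (2*u+5) (by omega)]
    have key : (u+4)*(u+4)*(u+4)*(u+4) ≤ (2*u+6)*(2*u+7)*(2*u+8)*(2*u+9) := by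
      gcongr <;> omega
    calc 48 * ((u+1+3) * (u+3).factorial) ^ 4
        = ((u+4)*(u+4)*(u+4)*(u+4)) * (48 * (u+3).factorial ^ 4) := by ring
      _ ≤ ((2*u+6)*(2*u+7)*(2*u+8)*(2*u+9)) *
            ((2*u+5).factorial * ((2*u+7) * ((2*u+6) * (2*u+5).factorial))) :=
          Nat.mul_le_mul key ih
      _ = _ := by ring

lemma a4ii_aux (u : ℕ) : 576 * (u+3).factorial ^ 8 ≤
    (2*u+4).factorial * (2*u+5).factorial * (2*u+6).factorial * (2*u+7).factorial := by
  induction u with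
  | zero => norm_num [Nat.factorial]
  | succ u ih =>
    simp only [fs_aux (2*u+7) (2*u+6) (by omega), fs_aux (2*u+6) (2*u+5) (by omega),
      fs_aux (2*u+5) (2*u+4) (by omega)] at ih
    simp only [fs_aux (u+1+3) (u+3) (by omega),
      fs_aux (2*(u+1)+4) (2*u+5) (by omega), fs_aux (2*(u+1)+5) (2*u+6) (by omega),
      fs_aux (2*(u+1)+6) (2*u+7) (by omega), fs_aux (2*(u+1)+7) (2*u+8) (by omega),
      fs_aux (2*u+8) (2*u+7) (by omega), fs_aux (2*u+7) (2*u+6) (by omega),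
      fs_aux (2*u+6) (2*u+5) (by omega), fs_aux (2*u+5) (2*u+4) (by omega)]
    have key : (u+4)*(u+4)*(u+4)*(u+4)*(u+4)*(u+4)*(u+4)*(u+4) ≤
        (2*u+5)*(2*u+6)*(2*u+6)*(2*u+7)*(2*u+7)*(2*u+8)*(2*u+8)*(2*u+9) := by
      gcongr <;> omega
    calc 576 * ((u+1+3) * (u+3).factorial) ^ 8
        = ((u+4)*(u+4)*(u+4)*(u+4)*(u+4)*(u+4)*(u+4)*(u+4)) *
            (576 * (u+3).factorial ^ 8) := by ring
      _ ≤ ((2*u+5)*(2*u+6)*(2*u+6)*(2*u+7)*(2*u+7)*(2*u+8)*(2*u+8)*(2*u+9)) *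
            ((2*u+4).factorial * ((2*u+5) * (2*u+4).factorial) *
              ((2*u+6) * ((2*u+5) * (2*u+4).factorial)) *
              ((2*u+7) * ((2*u+6) * ((2*u+5) * (2*u+4).factorial)))) :=
          Nat.mul_le_mul key ih
      _ = _ := by ring

lemma a3i_aux (v : ℕ) : 12 * (4*v+4).factorial ^ 3 ≤ (6*v+5).factorial * (6*v+7).factorial := by
  induction v with
  | zero => norm_num [Nat.factorial]
  | succ v ih =>
    simp only [fs_aux (6*v+7) (6*v+6) (by omega), fs_aux (6*v+6) (6*v+5) (by omega)] at ih
    simp only [fs_aux (4*(v+1)+4) (4*v+7) (by omega), fs_aux (4*v+7) (4*v+6) (by omega),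
      fs_aux (4*v+6) (4*v+5) (by omega), fs_aux (4*v+5) (4*v+4) (by omega),
      fs_aux (6*(v+1)+5) (6*v+10) (by omega), fs_aux (6*(v+1)+7) (6*v+12) (by omega),
      fs_aux (6*v+12) (6*v+11) (by omega), fs_aux (6*v+11) (6*v+10) (by omega),
      fs_aux (6*v+10) (6*v+9) (by omega), fs_aux (6*v+9) (6*v+8) (by omega),
      fs_aux (6*v+8) (6*v+7) (by omega), fs_aux (6*v+7) (6*v+6) (by omega),
      fs_aux (6*v+6) (6*v+5) (by omega)]
    have key : (4*v+5)*(4*v+5)*(4*v+5)*(4*v+6)*(4*v+6)*(4*v+6)*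
        (4*v+7)*(4*v+7)*(4*v+7)*(4*v+8)*(4*v+8)*(4*v+8) ≤
        (6*v+6)*(6*v+7)*(6*v+8)*(6*v+8)*(6*v+9)*(6*v+9)*
        (6*v+10)*(6*v+10)*(6*v+11)*(6*v+11)*(6*v+12)*(6*v+13) := by
      gcongr <;> omega
    calc 12 * ((4*(v+1)+4) * ((4*v+7) * ((4*v+6) * ((4*v+5) * (4*v+4).factorial)))) ^ 3
        = ((4*v+5)*(4*v+5)*(4*v+5)*(4*v+6)*(4*v+6)*(4*v+6)*
           (4*v+7)*(4*v+7)*(4*v+7)*(4*v+8)*(4*v+8)*(4*v+8)) *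
          (12 * (4*v+4).factorial ^ 3) := by ring
      _ ≤ ((6*v+6)*(6*v+7)*(6*v+8)*(6*v+8)*(6*v+9)*(6*v+9)*
           (6*v+10)*(6*v+10)*(6*v+11)*(6*v+11)*(6*v+12)*(6*v+13)) *
          ((6*v+5).factorial * ((6*v+7) * ((6*v+6) * (6*v+5).factorial))) :=
          Nat.mul_le_mul key ih
      _ = _ := by ring

lemma a3ii_aux (v : ℕ) : 36 * (4*v+4).factorial ^ 6 ≤
    (6*v+4).factorial * (6*v+5).factorial * (6*v+6).factorial * (6*v+7).factorial := by
  induction v with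
  | zero => norm_num [Nat.factorial]
  | succ v ih =>
    simp only [fs_aux (6*v+7) (6*v+6) (by omega), fs_aux (6*v+6) (6*v+5) (by omega),
      fs_aux (6*v+5) (6*v+4) (by omega)] at ih
    simp only [fs_aux (4*(v+1)+4) (4*v+7) (by omega), fs_aux (4*v+7) (4*v+6) (by omega),
      fs_aux (4*v+6) (4*v+5) (by omega), fs_aux (4*v+5) (4*v+4) (by omega),
      fs_aux (6*(v+1)+4) (6*v+9) (by omega), fs_aux (6*(v+1)+5) (6*v+10) (by omega),
      fs_aux (6*(v+1)+6) (6*v+11) (by omega), fs_aux (6*(v+1)+7) (6*v+12) (by omega),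
      fs_aux (6*v+12) (6*v+11) (by omega), fs_aux (6*v+11) (6*v+10) (by omega),
      fs_aux (6*v+10) (6*v+9) (by omega), fs_aux (6*v+9) (6*v+8) (by omega),
      fs_aux (6*v+8) (6*v+7) (by omega), fs_aux (6*v+7) (6*v+6) (by omega),
      fs_aux (6*v+6) (6*v+5) (by omega), fs_aux (6*v+5) (6*v+4) (by omega)]
    have key : (4*v+5)*(4*v+5)*(4*v+5)*(4*v+5)*(4*v+5)*(4*v+5)*
        (4*v+6)*(4*v+6)*(4*v+6)*(4*v+6)*(4*v+6)*(4*v+6)*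
        (4*v+7)*(4*v+7)*(4*v+7)*(4*v+7)*(4*v+7)*(4*v+7)*
        (4*v+8)*(4*v+8)*(4*v+8)*(4*v+8)*(4*v+8)*(4*v+8) ≤
        (6*v+5)*(6*v+6)*(6*v+6)*(6*v+7)*(6*v+7)*(6*v+7)*
        (6*v+8)*(6*v+8)*(6*v+8)*(6*v+8)*(6*v+9)*(6*v+9)*
        (6*v+9)*(6*v+9)*(6*v+10)*(6*v+10)*(6*v+10)*(6*v+10)*
        (6*v+11)*(6*v+11)*(6*v+11)*(6*v+12)*(6*v+12)*(6*v+13) := by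
      gcongr <;> omega
    calc 36 * ((4*(v+1)+4) * ((4*v+7) * ((4*v+6) * ((4*v+5) * (4*v+4).factorial)))) ^ 6
        = ((4*v+5)*(4*v+5)*(4*v+5)*(4*v+5)*(4*v+5)*(4*v+5)*
           (4*v+6)*(4*v+6)*(4*v+6)*(4*v+6)*(4*v+6)*(4*v+6)*
           (4*v+7)*(4*v+7)*(4*v+7)*(4*v+7)*(4*v+7)*(4*v+7)*
           (4*v+8)*(4*v+8)*(4*v+8)*(4*v+8)*(4*v+8)*(4*v+8)) *
          (36 * (4*v+4).factorial ^ 6) := by ring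
      _ ≤ ((6*v+5)*(6*v+6)*(6*v+6)*(6*v+7)*(6*v+7)*(6*v+7)*
           (6*v+8)*(6*v+8)*(6*v+8)*(6*v+8)*(6*v+9)*(6*v+9)*
           (6*v+9)*(6*v+9)*(6*v+10)*(6*v+10)*(6*v+10)*(6*v+10)*
           (6*v+11)*(6*v+11)*(6*v+11)*(6*v+12)*(6*v+12)*(6*v+13)) *
          ((6*v+4).factorial * ((6*v+5) * (6*v+4).factorial) *
            ((6*v+6) * ((6*v+5) * (6*v+4).factorial)) *
            ((6*v+7) * ((6*v+6) * ((6*v+5) * (6*v+4).factorial)))) :=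
          Nat.mul_le_mul key ih
      _ = _ := by ring

lemma alpha_lt_aux (m : ℕ) (hm : 2 ≤ m) : alpha m < m := by
  have hsub : m.primeFactors ⊆ Finset.Icc 2 m := by
    intro p hp
    rw [Nat.mem_primeFactors] at hp
    exact Finset.mem_Icc.2 ⟨hp.1.two_le, Nat.le_of_dvd (by omega) hp.2.1⟩
  calc alpha m ≤ (Finset.Icc 2 m).card := Finset.card_le_card hsub
    _ = m - 1 := by rw [Nat.card_Icc]; omega
    _ < m := by omega

lemma main_real_aux (F A G : ℝ) (m : ℕ) (hm : 2 ≤ m)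
    (hF : 0 ≤ F) (hA : 0 ≤ A) (h1 : 2 * F ≤ G) (h2 : F ^ 2 ≤ A * G) :
    (m : ℝ) * (F / 2) ^ m ≤ A * (G / 2) ^ (m - 1) := by
  have hG : 0 ≤ G := le_trans (by linarith) h1
  induction m, hm using Nat.le_induction with
  | base =>
    have : ((2:ℕ) : ℝ) * (F/2)^2 = F^2/2 := by push_cast; ring
    rw [this]
    simpa using by linarith [h2]
  | succ k hk ih =>
    have hX : (0:ℝ) ≤ F/2 := by linarith
    have hXk : (0:ℝ) ≤ (F/2)^k := pow_nonneg hX k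
    have hk1 : k - 1 + 1 = k := by omega
    have hstep1 : ((k+1 : ℕ) : ℝ) * (F/2)^(k+1) ≤ (2*(F/2)) * ((k:ℝ) * (F/2)^k) := by
      push_cast
      rw [pow_succ]
      have hk2 : (2:ℝ) ≤ (k:ℝ) := by exact_mod_cast hk
      nlinarith [mul_nonneg hXk hX]
    have hstep2 : (2*(F/2)) * ((k:ℝ) * (F/2)^k) ≤ (G/2) * (A * (G/2)^(k-1)) := by
      apply mul_le_mul (by linarith) ih (by positivity) (by linarith)
    calc ((k+1 : ℕ) : ℝ) * (F/2)^(k+1) ≤ (G/2) * (A * (G/2)^(k-1)) := le_trans hstep1 hstep2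
      _ = A * ((G/2)^(k-1) * (G/2)) := by ring
      _ = A * (G/2)^(k+1-1) := by rw [← pow_succ, hk1]; norm_num

/-- **Lemma 13 (1).** For `m ≥ 2`, `n > 10` divisible by `4`, and `a` the
smallest divisor of `n` greater than `2`,
`(1 + α(m))·(((n/a)!)^a·a!/2)^m ≤ ((n/2-2)!)·((n/2)!)·(((n/2-1)!·((n/2)+1)!)/2)^(m-1)`
(over the reals). -/
theorem imprimitive_bound_div_four (m : ℕ) (hm : 2 ≤ m) (n : ℕ) (hn : 10 < n) (h4 : 4 ∣ n)
    (a : ℕ) (ha : a ∣ n) (ha2 : 2 < a) (hamin : ∀ b : ℕ, b ∣ n → 2 < b → a ≤ b) :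
    (1 + (alpha m : ℝ)) * (((Nat.factorial (n / a) : ℝ) ^ a * Nat.factorial a) / 2) ^ m ≤
      (Nat.factorial (n / 2 - 2) : ℝ) * (Nat.factorial (n / 2) : ℝ) *
        (((Nat.factorial (n / 2 - 1) : ℝ) * (Nat.factorial (n / 2 + 1) : ℝ)) / 2) ^ (m - 1) := by
  have ha4 : a ≤ 4 := hamin 4 h4 (by norm_num)
  have hα : (1 : ℝ) + (alpha m : ℝ) ≤ (m : ℝ) := by
    have := alpha_lt_aux m hm
    push_cast
    exact_mod_cast by omega
  have ha34 : a = 3 ∨ a = 4 := by omega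
  rcases ha34 with rfl | rfl
  · -- a = 3 : then 12 ∣ n
    have h3 : 3 ∣ n := ha
    obtain ⟨v, rfl⟩ : ∃ v, n = 12*v+12 := ⟨n/12 - 1, by omega⟩
    rw [show (12*v+12)/3 = 4*v+4 by omega, show (12*v+12)/2 = 6*v+6 by omega,
        show 6*v+6-2 = 6*v+4 by omega, show 6*v+6-1 = 6*v+5 by omega]
    refine le_trans (mul_le_mul_of_nonneg_right hα (by positivity)) ?_
    have hfact3 : (Nat.factorial 3 : ℝ) = 6 := by norm_num [Nat.factorial]
    have h1 : 2 * ((Nat.factorial (4*v+4) : ℝ) ^ 3 * (Nat.factorial 3 : ℝ)) ≤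
        (Nat.factorial (6*v+5) : ℝ) * (Nat.factorial (6*v+7) : ℝ) := by
      have h := a3i_aux v
      rw [hfact3]
      have : (12 : ℝ) * (Nat.factorial (4*v+4) : ℝ) ^ 3 ≤
          (Nat.factorial (6*v+5) : ℝ) * (Nat.factorial (6*v+7) : ℝ) := by exact_mod_cast h
      linarith
    have h2 : ((Nat.factorial (4*v+4) : ℝ) ^ 3 * (Nat.factorial 3 : ℝ)) ^ 2 ≤
        ((Nat.factorial (6*v+4) : ℝ) * (Nat.factorial (6*v+6) : ℝ)) *
          ((Nat.factorial (6*v+5) : ℝ) * (Nat.factorial (6*v+7) : ℝ)) := by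
      have h := a3ii_aux v
      rw [hfact3]
      have h' : (36 : ℝ) * (Nat.factorial (4*v+4) : ℝ) ^ 6 ≤
          (Nat.factorial (6*v+4) : ℝ) * (Nat.factorial (6*v+5) : ℝ) *
            (Nat.factorial (6*v+6) : ℝ) * (Nat.factorial (6*v+7) : ℝ) := by exact_mod_cast h
      nlinarith [h']
    have := main_real_aux ((Nat.factorial (4*v+4) : ℝ) ^ 3 * (Nat.factorial 3 : ℝ))
      ((Nat.factorial (6*v+4) : ℝ) * (Nat.factorial (6*v+6) : ℝ))
      ((Nat.factorial (6*v+5) : ℝ) * (Nat.factorial (6*v+7) : ℝ)) m hm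
      (by positivity) (by positivity) h1 h2
    convert this using 2
  · -- a = 4
    obtain ⟨u, rfl⟩ : ∃ u, n = 4*u+12 := ⟨n/4 - 3, by omega⟩
    rw [show (4*u+12)/4 = u+3 by omega, show (4*u+12)/2 = 2*u+6 by omega,
        show 2*u+6-2 = 2*u+4 by omega, show 2*u+6-1 = 2*u+5 by omega]
    refine le_trans (mul_le_mul_of_nonneg_right hα (by positivity)) ?_
    have hfact4 : (Nat.factorial 4 : ℝ) = 24 := by norm_num [Nat.factorial]
    have h1 : 2 * ((Nat.factorial (u+3) : ℝ) ^ 4 * (Nat.factorial 4 : ℝ)) ≤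
        (Nat.factorial (2*u+5) : ℝ) * (Nat.factorial (2*u+7) : ℝ) := by
      have h := a4i_aux u
      rw [hfact4]
      have : (48 : ℝ) * (Nat.factorial (u+3) : ℝ) ^ 4 ≤
          (Nat.factorial (2*u+5) : ℝ) * (Nat.factorial (2*u+7) : ℝ) := by exact_mod_cast h
      linarith
    have h2 : ((Nat.factorial (u+3) : ℝ) ^ 4 * (Nat.factorial 4 : ℝ)) ^ 2 ≤
        ((Nat.factorial (2*u+4) : ℝ) * (Nat.factorial (2*u+6) : ℝ)) *
          ((Nat.factorial (2*u+5) : ℝ) * (Nat.factorial (2*u+7) : ℝ)) := by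
      have h := a4ii_aux u
      rw [hfact4]
      have h' : (576 : ℝ) * (Nat.factorial (u+3) : ℝ) ^ 8 ≤
          (Nat.factorial (2*u+4) : ℝ) * (Nat.factorial (2*u+5) : ℝ) *
            (Nat.factorial (2*u+6) : ℝ) * (Nat.factorial (2*u+7) : ℝ) := by exact_mod_cast h
      nlinarith [h']
    have := main_real_aux ((Nat.factorial (u+3) : ℝ) ^ 4 * (Nat.factorial 4 : ℝ))
      ((Nat.factorial (2*u+4) : ℝ) * (Nat.factorial (2*u+6) : ℝ))
      ((Nat.factorial (2*u+5) : ℝ) * (Nat.factorial (2*u+7) : ℝ)) m hm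
      (by positivity) (by positivity) h1 h2
    convert this using 2
end

section
/- Let n > 12 be an odd composite integer with smallest prime divisor p, and let m ≥ 2 be an integer. Then 2^{nm − m − 1}·((n/p)!)^{mp}·(p!)^m ≤ (n!)^m. -/
open Nat

lemma aux_choose_add (n k : ℕ) : ∀ j : ℕ,
    n.choose (k+1) + j * n.choose k ≤ (n + j).choose (k+1) := by
  intro j
  induction j with
  | zero => simp
  | succ j ih =>
    have h1 : (n + j + 1).choose (k+1) = (n + j).choose k + (n + j).choose (k+1) :=
      Nat.choose_succ_succ (n + j) k
    have h2 : n.choose k ≤ (n + j).choose k := Nat.choose_le_choose _ (Nat.le_add_right _ _)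
    have : n + (j + 1) = n + j + 1 := by ring
    rw [this, h1]
    nlinarith [ih]

lemma pow_le_choose_mul (i : ℕ) : ∀ k : ℕ, i ^ k ≤ (i * k).choose k := by
  intro k
  induction k with
  | zero => simp
  | succ k ih =>
    have h1 : i ^ (k+1) = i ^ k * i := by ring
    have h2 : i ^ k * i ≤ (i * k).choose k * i := Nat.mul_le_mul_right _ ih
    have h3 : (i * k).choose (k+1) + i * (i * k).choose k ≤ (i * k + i).choose (k+1) :=
      aux_choose_add (i * k) k i
    have h4 : i * (k + 1) = i * k + i := by ring
    rw [h1, h4]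
    calc i ^ k * i ≤ (i * k).choose k * i := h2
    _ ≤ (i * k).choose (k+1) + i * (i * k).choose k := by nlinarith
    _ ≤ (i * k + i).choose (k+1) := h3

lemma base3 : ∀ k : ℕ, 5 ≤ k → 3 * 8 ^ k * (k)! ^ 3 ≤ (3 * k)! := by
  intro k hk
  induction k with
  | zero => omega
  | succ k ih =>
    rcases Nat.lt_or_ge k 5 with h | h
    · have hk4 : k = 4 := by omega
      subst hk4
      norm_num [Nat.factorial]
    · have IH := ih h
      have e1 : 3 * (k + 1) = 3 * k + 3 := by ring
      rw [e1]
      have e2 : (3 * k + 3)! = (3 * k)! * ((3*k+1) * (3*k+2) * (3*k+3)) := by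
        rw [Nat.factorial_succ, Nat.factorial_succ, Nat.factorial_succ]
        ring
      have e3 : (k+1)! = (k)! * (k+1) := by
        rw [Nat.factorial_succ]; ring
      rw [e2, e3]
      have key : 8 * (k+1)^3 ≤ (3*k+1) * (3*k+2) * (3*k+3) := by
        have e5 : 8 * (k+1)^3 = (2*k+2) * (2*k+2) * (2*k+2) := by ring
        rw [e5]
        have b1 : 2*k+2 ≤ 3*k+1 := by omega
        exact Nat.mul_le_mul (Nat.mul_le_mul b1 (by omega)) (by omega)
      calc 3 * 8 ^ (k+1) * ((k)! * (k+1)) ^ 3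
          = (3 * 8 ^ k * (k)! ^ 3) * (8 * (k+1)^3) := by ring
        _ ≤ (3 * k)! * ((3*k+1) * (3*k+2) * (3*k+3)) :=
            Nat.mul_le_mul IH key

lemma mainlem : ∀ p k : ℕ, 3 ≤ p → 5 ≤ k →
    2 ^ (p * k - 1) * (k)! ^ p * (p)! ≤ (p * k)! := by
  intro p
  induction p with
  | zero => omega
  | succ p ih =>
    intro k hp hk
    rcases Nat.lt_or_ge p 3 with h | h
    · -- p + 1 = 3
      have hp3 : p = 2 := by omega
      subst hp3
      have e : 2 ^ (3 * k - 1) * (k)! ^ 3 * (3)! = 3 * 8 ^ k * (k)! ^ 3 := by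
        have hk1 : 1 ≤ 3 * k := by omega
        have : 8 ^ k = 2 ^ (3 * k) := by
          rw [show (8:ℕ) = 2^3 by norm_num, ← pow_mul]
        rw [this, show (3)! = 6 from rfl,
          show 2 ^ (3 * k) = 2 ^ (3 * k - 1) * 2 by
            rw [← pow_succ]; congr 1; omega]
        ring
      have := base3 k hk
      calc 2 ^ ((2+1) * k - 1) * (k)! ^ (2+1) * (2+1)!
          = 3 * 8 ^ k * (k)! ^ 3 := e
        _ ≤ (3 * k)! := this
    · have IH := ih k h hk
      -- (p+1)*k = p*k + k
      have e1 : (p + 1) * k = p * k + k := by ring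
      have hchoose : (p * k + k).choose k * (k)! * (p * k)! = (p * k + k)! := by
        have := Nat.choose_mul_factorial_mul_factorial (Nat.le_add_left k (p * k))
        simpa [Nat.add_sub_cancel] using this
      -- lower bound for the choose
      have hc1 : (p + 1) ^ k ≤ (p * k + k).choose k := by
        have := pow_le_choose_mul (p + 1) k
        rwa [show (p+1) * k = p * k + k by ring] at this
      have hc2 : 2 ^ k * (p + 1) ≤ (p + 1) ^ k := by
        have hk2 : 2 ≤ k := by omega
        have e2 : (p + 1) ^ k = (p + 1) ^ (k - 1) * (p + 1) := by
          rw [← pow_succ]; congr 1; omega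
        have h4 : 2 ^ k ≤ 4 ^ (k - 1) := by
          rw [show (4:ℕ) = 2^2 by norm_num, ← pow_mul]
          exact Nat.pow_le_pow_right (by norm_num) (by omega)
        have h5 : (4:ℕ) ^ (k-1) ≤ (p + 1) ^ (k - 1) :=
          Nat.pow_le_pow_left (by omega) _
        rw [e2]
        exact Nat.mul_le_mul (h4.trans h5) (le_refl _)
      have hc : 2 ^ k * (p + 1) ≤ (p * k + k).choose k := le_trans hc2 hc1
      have e3 : 2 ^ (p * k + k - 1) = 2 ^ (p * k - 1) * 2 ^ k := by
        rw [← pow_add]; congr 1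
        have : 3 * 5 ≤ p * k := Nat.mul_le_mul h hk
        omega
      have e4 : (p+1)! = (p)! * (p + 1) := by rw [Nat.factorial_succ]; ring
      rw [e1, e3, e4, ← hchoose]
      calc 2 ^ (p * k - 1) * 2 ^ k * (k)! ^ (p + 1) * ((p)! * (p + 1))
          = (2 ^ (p * k - 1) * (k)! ^ p * (p)!) * (2 ^ k * (p + 1)) * (k)! := by ring
        _ ≤ (p * k)! * ((p * k + k).choose k) * (k)! :=
            Nat.mul_le_mul_right _ (Nat.mul_le_mul IH hc)
        _ = (p * k + k).choose k * (k)! * (p * k)! := by ring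

/-- **Lemma 15 (1).** For `n > 12` odd and composite with smallest prime divisor
`p`, and `m ≥ 2`, `2^(nm-m-1)·((n/p)!)^(mp)·(p!)^m ≤ (n!)^m`. -/
theorem final_inequality (n : ℕ) (hn : 12 < n) (hodd : Odd n) (hcomp : ¬ n.Prime)
    (p : ℕ) (hp : p.Prime) (hpn : p ∣ n) (hmin : ∀ q : ℕ, q.Prime → q ∣ n → p ≤ q)
    (m : ℕ) (hm : 2 ≤ m) :
    2 ^ (n * m - m - 1) * Nat.factorial (n / p) ^ (m * p) * Nat.factorial p ^ m ≤
      Nat.factorial n ^ m := by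
  set k := n / p with hk
  have hpk : p * k = n := Nat.mul_div_cancel' hpn
  have hp2 : 2 ≤ p := hp.two_le
  have hpodd : p ≠ 2 := by
    rintro rfl
    rcases hodd with ⟨t, ht⟩
    omega
  have hp3 : 3 ≤ p := by omega
  have hk1 : 1 < k := by
    rcases Nat.lt_or_ge 1 k with h | h
    · exact h
    · exfalso
      interval_cases k
      · omega
      · rw [mul_one] at hpk; subst hpk; exact hcomp hp
  have hk5 : 5 ≤ k := by
    rcases Nat.lt_or_ge p 5 with h | h
    · -- p = 3 or 4; p odd prime so p = 3
      have : p = 3 ∨ p = 4 := by omega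
      have hp4 : p ≠ 4 := by
        rintro rfl
        norm_num at hp
      have hp33 : p = 3 := by omega
      subst hp33
      omega
    · -- k's smallest prime factor divides n, hence ≥ p ≥ 5
      have hkne : k ≠ 1 := by omega
      have hq := Nat.minFac_prime hkne
      have hqk : k.minFac ∣ k := Nat.minFac_dvd k
      have hqn : k.minFac ∣ n := hqk.trans (Nat.div_dvd_of_dvd hpn)
      have := hmin k.minFac hq hqn
      have := Nat.minFac_le (by omega : 0 < k)
      omega
  have core : 2 ^ (n - 1) * (k)! ^ p * (p)! ≤ (n)! := by
    have := mainlem p k hp3 hk5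
    rwa [hpk] at this
  have corem : (2 ^ (n - 1) * (k)! ^ p * (p)!) ^ m ≤ (n)! ^ m :=
    Nat.pow_le_pow_left core m
  have e : (2 ^ (n - 1) * (k)! ^ p * (p)!) ^ m
      = 2 ^ ((n-1) * m) * (k)! ^ (m * p) * (p)! ^ m := by
    rw [mul_pow, mul_pow, ← pow_mul, ← pow_mul]
    ring_nf
  have hexp : n * m - m - 1 ≤ (n - 1) * m := by
    have : (n - 1) * m = n * m - m := by
      rw [Nat.sub_mul, one_mul]
    omega
  calc 2 ^ (n * m - m - 1) * (k)! ^ (m * p) * (p)! ^ m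
      ≤ 2 ^ ((n - 1) * m) * (k)! ^ (m * p) * (p)! ^ m := by
        have := Nat.pow_le_pow_right (by norm_num : 1 ≤ 2) hexp
        exact Nat.mul_le_mul_right _ (Nat.mul_le_mul_right _ this)
    _ = (2 ^ (n - 1) * (k)! ^ p * (p)!) ^ m := e.symm
    _ ≤ (n)! ^ m := corem
end
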